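/- arXiv:2604.04676 — 2 statements merged into one kernel-verified Lean document; each statement's English description precedes it below -/
import Mathlib

section
/- Concentration at the origin: Let p ≥ 2, α = p − 1, 0 < R < ∞, θ ≥ α and 0 ≤ ν < λ_{α,θ}, and let (u_ε) be a subcritical extremal family with u_ε ⇀ u_0 weakly in X^{1,p}_R(α,θ). If u_0 ≡ 0, then for every r_0 > 0 one has lim_{ε→0} ∫_{r_0}^R |u_ε′|^p dλ_α = 0. -/
open MeasureTheory Filter Set Topology Asymptotics

noncomputable section

/-- `ω_t = 2π^{t/2}/Γ(t/2)`, the "area" constant of the `t`-dimensional fractional sphere. -/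
def omegaDim (t : ℝ) : ℝ := 2 * Real.pi ^ (t / 2) / Real.Gamma (t / 2)

/-- The `t`-fractional integral `∫_0^R f dλ_t = ω_t ∫_0^R f(r) r^t dr`. -/
def fracInt (t R : ℝ) (f : ℝ → ℝ) : ℝ := omegaDim t * ∫ r in Set.Ioo (0:ℝ) R, f r * r ^ t

/-- `‖u‖_{L^p_t}^p` on `(0,R)`. -/
def normP (p t R : ℝ) (u : ℝ → ℝ) : ℝ := fracInt t R (fun r => |u r| ^ p)

/-- `‖u'‖_{L^p_t}^p` on `(0,R)`. -/
def gradP (p t R : ℝ) (u : ℝ → ℝ) : ℝ := fracInt t R (fun r => |deriv u r| ^ p)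

/-- Membership in the weighted Sobolev space `X^{1,p}_R(α,θ)`: `u` is (locally) absolutely
continuous on `(0,R]` with `u(R) = 0` (expressed through the fundamental theorem of calculus),
`u ∈ L^p_θ` and `u' ∈ L^p_α`. -/
def MemX (p α θ R : ℝ) (u : ℝ → ℝ) : Prop :=
  (∀ r ∈ Set.Ioc (0:ℝ) R, u r = - ∫ t in r..R, deriv u t) ∧
  MeasureTheory.IntegrableOn (fun r => |u r| ^ p * r ^ θ) (Set.Ioo 0 R) ∧
  MeasureTheory.IntegrableOn (fun r => |deriv u r| ^ p * r ^ α) (Set.Ioo 0 R)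

/-- The first eigenvalue type constant
`λ_{α,θ} = inf { ‖u'‖_{L^p_α}^p / ‖u‖_{L^p_θ}^p : u ∈ X^{1,p}_R(α,θ), u ≢ 0 }`. -/
def lamInf (p α θ R : ℝ) : ℝ :=
  sInf ((fun u => gradP p α R u / normP p θ R u) ''
    {u : ℝ → ℝ | MemX p α θ R u ∧ u ≠ fun _ => 0})

/-- `H_ν(u) = (‖u'‖_{L^p_α}^p − ν ‖u‖_{L^p_θ}^p)^{1/p}`. -/
def Hnu (p α θ R ν : ℝ) (u : ℝ → ℝ) : ℝ := (gradP p α R u - ν * normP p θ R u) ^ (1 / p)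

/-- `μ_{α,θ} = (θ+1) ω_α^{1/α}`. -/
def muC (α θ : ℝ) : ℝ := (θ + 1) * omegaDim α ^ (1 / α)

/-- The Trudinger–Moser functional `∫_0^R e^{m |u|^{p/(p-1)}} dλ_θ`. -/
def TMint (m p t R : ℝ) (u : ℝ → ℝ) : ℝ :=
  fracInt t R (fun r => Real.exp (m * |u r| ^ (p / (p - 1))))

/-- The set of values of the Trudinger–Moser functional with exponent constant `m`, over the
Tintarev-type constraint set `{u ∈ X^{1,p}_R(α,θ) : H_ν(u) ≤ 1}`. -/
def Sset (p α θ R ν m : ℝ) : Set ℝ :=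
  (fun u => TMint m p θ R u) '' {u : ℝ → ℝ | MemX p α θ R u ∧ Hnu p α θ R ν u ≤ 1}

/-- The critical supremum `S(p,ν,θ,R)`. -/
def Scrit (p α θ R ν : ℝ) : ℝ := sSup (Sset p α θ R ν (muC α θ))

/-- The subcritical supremum `S_ε(p,ν,θ,R)` (with `μ_ε = μ_{α,θ} − ε`). -/
def Ssub (p α θ R ν ε : ℝ) : ℝ := sSup (Sset p α θ R ν (muC α θ - ε))

/-- The Lagrange multiplier `λ_ε = ∫_0^R e^{m u^{p/(p-1)}} u^{p/(p-1)} dλ_θ`. -/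
def lamEL (m p t R : ℝ) (u : ℝ → ℝ) : ℝ :=
  fracInt t R (fun r => Real.exp (m * u r ^ (p / (p - 1))) * u r ^ (p / (p - 1)))

/-- The Euler–Lagrange equation satisfied by a subcritical maximizer. -/
def EulerLagrange (p α θ R ν m : ℝ) (u : ℝ → ℝ) : Prop :=
  ∀ v : ℝ → ℝ, MemX p α θ R v →
    fracInt α R (fun r => |deriv u r| ^ (p - 2) * deriv u r * deriv v r) =
      (1 / lamEL m p θ R u) *
          fracInt θ R (fun r => Real.exp (m * u r ^ (p / (p - 1))) * u r ^ (1 / (p - 1)) * v r) +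
        ν * fracInt θ R (fun r => u r ^ (p - 1) * v r)

/-- A subcritical extremal family `(u_ε)_{0<ε<μ_{α,θ}}`: non-negative, non-increasing
`C^1[0,R]` maximizers of `S_ε(p,ν,θ,R)` with `H_ν(u_ε) = 1` satisfying the
Euler–Lagrange equation. -/
def SubcritFamily (p α θ R ν : ℝ) (u : ℝ → ℝ → ℝ) : Prop :=
  ∀ ε ∈ Set.Ioo (0:ℝ) (muC α θ),
    MemX p α θ R (u ε) ∧ ContDiffOn ℝ 1 (u ε) (Set.Icc 0 R) ∧
    (∀ r ∈ Set.Icc (0:ℝ) R, 0 ≤ u ε r) ∧ AntitoneOn (u ε) (Set.Icc 0 R) ∧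
    Hnu p α θ R ν (u ε) = 1 ∧
    TMint (muC α θ - ε) p θ R (u ε) = Ssub p α θ R ν ε ∧
    EulerLagrange p α θ R ν (muC α θ - ε) (u ε)

/-- Weak convergence in `X^{1,p}_R(α,θ)`: convergence of the pairings against arbitrary
`L^{p'}` data (`p' = p/(p−1)`) for both the functions and their derivatives. -/
def WeakConvX (p α θ R : ℝ) {ι : Type*} (l : Filter ι) (U : ι → ℝ → ℝ) (u : ℝ → ℝ) : Prop :=
  ∀ g h : ℝ → ℝ,
    MeasureTheory.IntegrableOn (fun r => |g r| ^ (p / (p - 1)) * r ^ α) (Set.Ioo 0 R) →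
    MeasureTheory.IntegrableOn (fun r => |h r| ^ (p / (p - 1)) * r ^ θ) (Set.Ioo 0 R) →
    Filter.Tendsto
      (fun j => (∫ r in Set.Ioo (0:ℝ) R, deriv (U j) r * g r * r ^ α) +
        ∫ r in Set.Ioo (0:ℝ) R, U j r * h r * r ^ θ) l
      (nhds ((∫ r in Set.Ioo (0:ℝ) R, deriv u r * g r * r ^ α) +
        ∫ r in Set.Ioo (0:ℝ) R, u r * h r * r ^ θ))

/-- The blow-up assumption: `u_ε ⇀ 0` weakly in `X^{1,p}_R(α,θ)` and
`a_ε = u_ε(0) → +∞` as `ε → 0`. -/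
def BlowUp (p α θ R : ℝ) (u : ℝ → ℝ → ℝ) : Prop :=
  WeakConvX p α θ R (𝓝[>] (0:ℝ)) (fun ε => u ε) (fun _ => 0) ∧
  Filter.Tendsto (fun ε => u ε 0) (𝓝[>] (0:ℝ)) Filter.atTop

/-- The blow-up scale `r_ε`, defined by
`r_ε^{θ+1} = λ_ε / (a_ε^{p/(p-1)} e^{μ_ε a_ε^{p/(p-1)}})`. -/
def rEps (p α θ R : ℝ) (u : ℝ → ℝ → ℝ) (ε : ℝ) : ℝ :=
  (lamEL (muC α θ - ε) p θ R (u ε) /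
      ((u ε 0) ^ (p / (p - 1)) * Real.exp ((muC α θ - ε) * (u ε 0) ^ (p / (p - 1))))) ^
    (1 / (θ + 1))

/-- The digamma function `Ψ = Γ'/Γ`. -/
def digamma (x : ℝ) : ℝ := deriv Real.Gamma x / Real.Gamma x

end

open MeasureTheory Filter Set Topology

namespace ConcAux

lemma omega_pos {t : ℝ} (ht : 0 < t) : 0 < omegaDim t := by
  have h1 : 0 < Real.Gamma (t/2) := Real.Gamma_pos_of_pos (by linarith)
  have h2 : 0 < Real.pi ^ (t/2) := Real.rpow_pos_of_pos Real.pi_pos _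
  unfold omegaDim
  positivity

lemma integrand_integrableOn {t R : ℝ} (ht : 0 ≤ t) {f : ℝ → ℝ}
    (hf : ContinuousOn f (Icc 0 R)) :
    IntegrableOn (fun r => f r * r ^ t) (Ioo (0:ℝ) R) := by
  refine (ContinuousOn.integrableOn_Icc ?_).mono_set Ioo_subset_Icc_self
  exact hf.mul (continuousOn_id.rpow_const fun x _ => Or.inr ht)

lemma fracInt_nonneg {t R : ℝ} (ht : 0 < t) {f : ℝ → ℝ}
    (hf : ∀ r ∈ Ioo (0:ℝ) R, 0 ≤ f r) : 0 ≤ fracInt t R f :=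
  mul_nonneg (omega_pos ht).le (setIntegral_nonneg measurableSet_Ioo fun r hr =>
    mul_nonneg (hf r hr) (Real.rpow_nonneg hr.1.le t))

lemma fracInt_mono {t R : ℝ} (ht : 0 < t) {f g : ℝ → ℝ}
    (hf : IntegrableOn (fun r => f r * r ^ t) (Ioo 0 R))
    (hg : IntegrableOn (fun r => g r * r ^ t) (Ioo 0 R))
    (h : ∀ r ∈ Ioo (0:ℝ) R, f r ≤ g r) : fracInt t R f ≤ fracInt t R g :=
  mul_le_mul_of_nonneg_left (setIntegral_mono_on hf hg measurableSet_Ioo fun r hr =>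
    mul_le_mul_of_nonneg_right (h r hr) (Real.rpow_nonneg hr.1.le t)) (omega_pos ht).le

lemma fracInt_add {t R : ℝ} {f g : ℝ → ℝ}
    (hf : IntegrableOn (fun r => f r * r ^ t) (Ioo 0 R))
    (hg : IntegrableOn (fun r => g r * r ^ t) (Ioo 0 R)) :
    fracInt t R (fun r => f r + g r) = fracInt t R f + fracInt t R g := by
  unfold fracInt
  rw [← mul_add, ← integral_add hf hg]
  congr 1
  apply setIntegral_congr_fun measurableSet_Ioo
  intro r _
  ring

lemma fracInt_const_mul {t R c : ℝ} {f : ℝ → ℝ} :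
    fracInt t R (fun r => c * f r) = c * fracInt t R f := by
  unfold fracInt
  rw [show (fun r => c * f r * r ^ t) = fun r => c * (f r * r ^ t) from funext fun r => by ring,
    integral_const_mul]
  ring

lemma exp_ineq {y m : ℝ} (hm : 0 < m) : Real.exp (m*y) ≤ m * y * Real.exp (m*y) + 1 := by
  set z := m * y with hz
  have h := mul_le_mul_of_nonneg_right (Real.add_one_le_exp (-z)) (Real.exp_pos z).le
  rw [← Real.exp_add, neg_add_cancel, Real.exp_zero] at h
  nlinarith

lemma habs_cube {x p : ℝ} (hp : 2 ≤ p) : |x| ^ (p-2) * x * x = |x| ^ p := by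
  rcases eq_or_ne x 0 with h | h
  · simp [h, Real.zero_rpow (by linarith : p ≠ 0)]
  · have h2 : x * x = |x| ^ (2:ℝ) := by
      rw [show ((2:ℝ)) = ((2:ℕ):ℝ) by norm_num, Real.rpow_natCast, sq_abs, sq]
    rw [mul_assoc, h2, ← Real.rpow_add (abs_pos.2 h)]
    norm_num

lemma meas_deriv_aux (w : ℝ → ℝ) (p α : ℝ) :
    Measurable (fun r => |deriv w r| ^ p * r ^ α) := by
  have h := measurable_deriv w
  measurability

lemma meas_ind_aux (a b p t : ℝ) :
    Measurable (fun r : ℝ => |Set.indicator (Set.Ioo a b) (fun _ => (1:ℝ)) r| ^ p * r ^ t) := by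
  have h : Measurable (Set.indicator (Set.Ioo a b) (fun _ => (1:ℝ))) :=
    measurable_const.indicator measurableSet_Ioo
  measurability

lemma fracInt_lower {t R a b k : ℝ} {f : ℝ → ℝ} (ht : 0 < t) (ha : 0 < a) (hab : a < b)
    (hbR : b ≤ R)
    (hint : IntegrableOn (fun r => f r * r ^ t) (Ioo 0 R))
    (h0 : ∀ r ∈ Ioo (0:ℝ) R, 0 ≤ f r * r ^ t)
    (hk : ∀ r ∈ Ioo a b, k ≤ f r * r ^ t) :
    omegaDim t * (k * (b - a)) ≤ fracInt t R f := by
  have hsub : Ioo a b ⊆ Ioo 0 R := Ioo_subset_Ioo ha.le hbR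
  have h1 : (∫ r in Ioo a b, f r * r ^ t) ≤ ∫ r in Ioo (0:ℝ) R, f r * r ^ t := by
    refine setIntegral_mono_set hint ?_ (HasSubset.Subset.eventuallyLE hsub)
    rw [EventuallyLE, ae_restrict_iff' measurableSet_Ioo]
    exact Filter.Eventually.of_forall h0
  have h2 : k * (b - a) ≤ ∫ r in Ioo a b, f r * r ^ t := by
    have h3 := setIntegral_mono_on (integrableOn_const measure_Ioo_lt_top.ne)
      (hint.mono_set hsub) measurableSet_Ioo hk
    rwa [setIntegral_const, Real.volume_real_Ioo_of_le (by linarith),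
      smul_eq_mul, mul_comm] at h3
  exact mul_le_mul_of_nonneg_left (h2.trans h1) (omega_pos ht).le

end ConcAux

namespace ConcAux

set_option maxHeartbeats 1000000 in
lemma key
    (p α θ R ν m r0 : ℝ) (hp : 2 ≤ p) (hα : α = p - 1) (hR : 0 < R)
    (hθ : α ≤ θ) (hν0 : 0 ≤ ν) (hν : ν < lamInf p α θ R)
    (hr0 : 0 < r0) (hr0R : r0 < R) (hm : 0 < m) (hmμ : m ≤ muC α θ)
    (κ : ℝ) (hκ : 0 < κ)
    (f : ℝ → ℝ) (hmem : MemX p α θ R f) (hC1 : ContDiffOn ℝ 1 f (Set.Icc 0 R))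
    (hpos : ∀ r ∈ Set.Icc (0:ℝ) R, 0 ≤ f r) (hmono : AntitoneOn f (Set.Icc 0 R))
    (hH : Hnu p α θ R ν f = 1)
    (hTMge : fracInt θ R (fun _ => 1) + m * κ ≤ TMint m p θ R f)
    (hEL : EulerLagrange p α θ R ν m f) :
    omegaDim α * ∫ r in Set.Ioo r0 R, |deriv f r| ^ p * r ^ α ≤
      f r0 * ((muC α θ + fracInt θ R (fun _ => 1) / κ + 1) +
        ν * (fracInt θ R (fun _ => 1) + 1 / (lamInf p α θ R - ν))) := by
  have hp1 : (0:ℝ) < p - 1 := by linarith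
  have hp0 : (0:ℝ) < p := by linarith
  have hα0 : 0 < α := by rw [hα]; linarith
  have hθ0 : 0 < θ := lt_of_lt_of_le hα0 hθ
  have hpp0 : 0 < p / (p - 1) := by positivity
  have hfc : ContinuousOn f (Icc 0 R) := hC1.continuousOn
  have hc0 : 0 ≤ f r0 := hpos r0 ⟨hr0.le, hr0R.le⟩
  -- the level set
  set T : Set ℝ := {r | r ∈ Icc r0 R ∧ f r0 ≤ f r} with hT
  have hTmem : r0 ∈ T := ⟨⟨le_rfl, hr0R.le⟩, le_rfl⟩
  have hTbdd : BddAbove T := ⟨R, fun x hx => hx.1.2⟩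
  have hTclosed : IsClosed T := by
    have he : T = Icc r0 R ∩ f ⁻¹' (Ici (f r0)) := by
      ext x; simp [hT, Set.mem_setOf_eq, Set.mem_inter_iff, Set.mem_preimage]
    rw [he]
    exact (hfc.mono (Icc_subset_Icc (by linarith) le_rfl)).preimage_isClosed_of_isClosed
      isClosed_Icc isClosed_Ici
  set s := sSup T with hs
  have hsT : s ∈ T := hTclosed.csSup_mem ⟨r0, hTmem⟩ hTbdd
  have hr0s : r0 ≤ s := le_csSup hTbdd hTmem
  have hsR : s ≤ R := hsT.1.2
  have hs0 : 0 < s := lt_of_lt_of_le hr0 hr0s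
  have hfs : f s = f r0 :=
    le_antisymm (hmono ⟨hr0.le, hr0R.le⟩ ⟨by linarith, hsR⟩ hr0s) hsT.2
  have hge : ∀ r ∈ Ioc (0:ℝ) s, f r0 ≤ f r := fun r hr =>
    hfs ▸ hmono ⟨hr.1.le, le_trans hr.2 hsR⟩ ⟨by linarith, hsR⟩ hr.2
  have hltc : ∀ r ∈ Ioc s R, f r < f r0 := by
    intro r hr
    have h1 : f r ≤ f r0 :=
      hmono ⟨hr0.le, hr0R.le⟩ ⟨by linarith [hr.1], hr.2⟩ (le_trans hr0s hr.1.le)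
    rcases h1.lt_or_eq with h | h
    · exact h
    · exact absurd (le_csSup hTbdd ⟨⟨le_trans hr0s hr.1.le, hr.2⟩, h.ge⟩) (not_le.2 hr.1)
  -- test function
  set v : ℝ → ℝ := fun r => min (f r) (f r0) with hv
  have hveq1 : ∀ r ∈ Ioc (0:ℝ) s, v r = f r0 := fun r hr => min_eq_right (hge r hr)
  have hveq2 : ∀ r ∈ Icc s R, v r = f r := by
    intro r hr
    exact min_eq_left (hfs ▸ hmono ⟨by linarith, hsR⟩ ⟨by linarith [hr.1], hr.2⟩ hr.1)
  have hvderiv1 : ∀ r ∈ Ioo (0:ℝ) s, deriv v r = 0 := by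
    intro r hr
    have hev : v =ᶠ[nhds r] fun _ => f r0 :=
      eventually_of_mem (isOpen_Ioo.mem_nhds hr) (fun t ht => hveq1 t ⟨ht.1, ht.2.le⟩)
    rw [hev.deriv_eq, deriv_const]
  have hvderiv2 : ∀ r ∈ Ioo s R, deriv v r = deriv f r := by
    intro r hr
    have hca : ContinuousAt f r := hfc.continuousAt (Icc_mem_nhds (by linarith [hr.1]) hr.2)
    have hev : v =ᶠ[nhds r] f := by
      filter_upwards [hca.preimage_mem_nhds (Iio_mem_nhds (hltc r ⟨hr.1, hr.2.le⟩))] with t ht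
      exact min_eq_left (le_of_lt ht)
    exact hev.deriv_eq
  have hfderiv0 : ∀ r ∈ Ioo r0 s, deriv f r = 0 := by
    intro r hr
    have hev : f =ᶠ[nhds r] fun _ => f r0 := by
      apply eventually_of_mem (isOpen_Ioo.mem_nhds hr)
      intro t ht
      exact le_antisymm
        (hmono ⟨hr0.le, hr0R.le⟩ ⟨by linarith [ht.1], by linarith [ht.2, hsR]⟩ ht.1.le)
        (hge t ⟨by linarith [ht.1], ht.2.le⟩)
    rw [hev.deriv_eq, deriv_const]
  -- a.e. exclusion of the junction point
  have haes : ∀ᵐ t : ℝ, t ≠ s := by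
    rw [ae_iff]
    simpa [not_ne_iff, Set.setOf_eq_eq_singleton] using measure_singleton s
  have haeR : ∀ᵐ t : ℝ, t ≠ R := by
    rw [ae_iff]
    simpa [not_ne_iff, Set.setOf_eq_eq_singleton] using measure_singleton R
  -- integrability of deriv f near R
  have hD'cont : ContinuousOn (derivWithin f (Icc 0 R)) (Icc 0 R) :=
    hC1.continuousOn_derivWithin (uniqueDiffOn_Icc hR) le_rfl
  have hDD' : ∀ r ∈ Ioo (0:ℝ) R, deriv f r = derivWithin f (Icc 0 R) r :=
    fun r hr => (derivWithin_of_mem_nhds (Icc_mem_nhds hr.1 hr.2)).symm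
  have hDintIoo : IntegrableOn (deriv f) (Ioo s R) := by
    refine IntegrableOn.congr_fun
      (((hD'cont.mono (Icc_subset_Icc (by linarith) le_rfl)).integrableOn_Icc).mono_set
        Ioo_subset_Icc_self)
      (fun x hx => (hDD' x ⟨by linarith [hx.1], hx.2⟩).symm) measurableSet_Ioo
  have hvDIoo : IntegrableOn (deriv v) (Ioo s R) :=
    IntegrableOn.congr_fun hDintIoo (fun x hx => (hvderiv2 x hx).symm) measurableSet_Ioo
  have hIIv : IntervalIntegrable (deriv v) volume s R :=
    (intervalIntegrable_iff_integrableOn_Ioc_of_le hsR).2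
      ((integrableOn_Ioc_iff_integrableOn_Ioo (f := deriv v)).2 hvDIoo)
  -- FTC for v
  have hint_vf : ∀ r ∈ Icc s R, (∫ t in r..R, deriv v t) = ∫ t in r..R, deriv f t := by
    intro r hr
    apply intervalIntegral.integral_congr_ae
    filter_upwards [haeR] with t htR htmem
    rw [Set.uIoc_of_le hr.2] at htmem
    exact hvderiv2 t ⟨lt_of_le_of_lt hr.1 htmem.1, lt_of_le_of_ne htmem.2 htR⟩
  have hFTCs : ∀ r ∈ Icc s R, v r = -∫ t in r..R, deriv v t := by
    intro r hr
    rw [hint_vf r hr, hveq2 r hr]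
    exact hmem.1 r ⟨by linarith [hr.1], hr.2⟩
  have hFTCv : ∀ r ∈ Ioc (0:ℝ) R, v r = -∫ t in r..R, deriv v t := by
    intro r hr
    rcases le_or_gt s r with h | h
    · exact hFTCs r ⟨h, hr.2⟩
    · have hIIv0 : IntervalIntegrable (deriv v) volume r s := by
        refine (intervalIntegrable_iff_integrableOn_Ioc_of_le h.le).2
          ((integrableOn_Ioc_iff_integrableOn_Ioo (f := deriv v)).2 ?_)
        exact IntegrableOn.congr_fun (integrableOn_zero)
          (fun x hx => (hvderiv1 x ⟨lt_trans hr.1 hx.1, hx.2⟩).symm) measurableSet_Ioo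
      have hsplit := intervalIntegral.integral_add_adjacent_intervals hIIv0 hIIv
      have h1 : (∫ t in r..s, deriv v t) = 0 := by
        have he : (∫ t in r..s, deriv v t) = ∫ t in r..s, (0:ℝ) := by
          apply intervalIntegral.integral_congr_ae
          filter_upwards [haes] with t hts htmem
          rw [Set.uIoc_of_le h.le] at htmem
          exact hvderiv1 t ⟨lt_trans hr.1 htmem.1, lt_of_le_of_ne htmem.2 hts⟩
        rw [he, intervalIntegral.integral_zero]
      have h2 : (∫ t in s..R, deriv v t) = -(f r0) := by
        have h3 := hFTCs s ⟨le_rfl, hsR⟩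
        rw [hveq1 s ⟨hs0, le_rfl⟩] at h3
        linarith
      rw [← hsplit, h1, h2, hveq1 r ⟨hr.1, h.le⟩]
      ring
  -- MemX for v
  have hmemv : MemX p α θ R v := by
    refine ⟨hFTCv, ?_, ?_⟩
    · have hvcont : ContinuousOn v (Icc 0 R) :=
        fun x hx => Filter.Tendsto.min (hfc x hx) continuousWithinAt_const
      exact integrand_integrableOn hθ0.le
        (hvcont.abs.rpow_const fun x _ => Or.inr hp0.le)
    · have hmeas : AEStronglyMeasurable (fun r => |deriv v r| ^ p * r ^ α)
          (volume.restrict (Ioo 0 R)) := (meas_deriv_aux v p α).aestronglyMeasurable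
      apply Integrable.mono hmem.2.2 hmeas
      rw [ae_restrict_iff' measurableSet_Ioo]
      filter_upwards [haes] with r hrs hr
      have hb : |deriv v r| ≤ |deriv f r| := by
        rcases lt_or_gt_of_ne hrs with h | h
        · rw [hvderiv1 r ⟨hr.1, h⟩]; simp [abs_nonneg]
        · rw [hvderiv2 r ⟨h, hr.2⟩]
      have hra : (0:ℝ) ≤ r ^ α := Real.rpow_nonneg hr.1.le α
      rw [Real.norm_eq_abs, Real.norm_eq_abs,
        abs_of_nonneg (mul_nonneg (Real.rpow_nonneg (abs_nonneg _) _) hra),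
        abs_of_nonneg (mul_nonneg (Real.rpow_nonneg (abs_nonneg _) _) hra)]
      exact mul_le_mul_of_nonneg_right (Real.rpow_le_rpow (abs_nonneg _) hb hp0.le) hra
  -- continuity catalogue
  have hvcont2 : ContinuousOn v (Icc 0 R) :=
    fun x hx => Filter.Tendsto.min (hfc x hx) continuousWithinAt_const
  have hcpow : ∀ q : ℝ, 0 ≤ q → ContinuousOn (fun r => f r ^ q) (Icc 0 R) :=
    fun q hq => hfc.rpow_const fun x _ => Or.inr hq
  have hcexp : ContinuousOn (fun r => Real.exp (m * f r ^ (p/(p-1)))) (Icc 0 R) :=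
    Real.continuous_exp.comp_continuousOn (continuousOn_const.mul (hcpow _ hpp0.le))
  -- integrability catalogue
  have hint1 : IntegrableOn
      (fun r => (Real.exp (m * f r ^ (p/(p-1))) * f r ^ (1/(p-1)) * v r) * r ^ θ) (Ioo 0 R) :=
    integrand_integrableOn hθ0.le ((hcexp.mul (hcpow _ (by positivity))).mul hvcont2)
  have hintE : IntegrableOn
      (fun r => (Real.exp (m * f r ^ (p/(p-1)))) * r ^ θ) (Ioo 0 R) :=
    integrand_integrableOn hθ0.le hcexp
  have hintL : IntegrableOn
      (fun r => (Real.exp (m * f r ^ (p/(p-1))) * f r ^ (p/(p-1))) * r ^ θ) (Ioo 0 R) :=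
    integrand_integrableOn hθ0.le (hcexp.mul (hcpow _ hpp0.le))
  have hint4 : IntegrableOn (fun r => (f r ^ (p-1) * v r) * r ^ θ) (Ioo 0 R) :=
    integrand_integrableOn hθ0.le ((hcpow _ (by linarith)).mul hvcont2)
  have hintN : IntegrableOn (fun r => (|f r| ^ p) * r ^ θ) (Ioo 0 R) :=
    integrand_integrableOn hθ0.le (hfc.abs.rpow_const fun x _ => Or.inr hp0.le)
  have hint1' : IntegrableOn (fun r => (1:ℝ) * r ^ θ) (Ioo 0 R) :=
    integrand_integrableOn hθ0.le continuousOn_const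
  have hintB1 : IntegrableOn (fun r => (f r0 * (Real.exp (m * f r ^ (p/(p-1)))
      + Real.exp (m * f r ^ (p/(p-1))) * f r ^ (p/(p-1)))) * r ^ θ) (Ioo 0 R) :=
    integrand_integrableOn hθ0.le
      (continuousOn_const.mul (hcexp.add (hcexp.mul (hcpow _ hpp0.le))))
  have hintB2 : IntegrableOn (fun r => (f r0 * (1 + |f r| ^ p)) * r ^ θ) (Ioo 0 R) :=
    integrand_integrableOn hθ0.le (continuousOn_const.mul
      (continuousOn_const.add (hfc.abs.rpow_const fun x _ => Or.inr hp0.le)))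
  have hintEm : IntegrableOn (fun r =>
      (m * (Real.exp (m * f r ^ (p/(p-1))) * f r ^ (p/(p-1))) + 1) * r ^ θ) (Ioo 0 R) :=
    integrand_integrableOn hθ0.le
      ((continuousOn_const.mul (hcexp.mul (hcpow _ hpp0.le))).add continuousOn_const)
  have hintMg : IntegrableOn (fun r =>
      (m * (Real.exp (m * f r ^ (p/(p-1))) * f r ^ (p/(p-1)))) * r ^ θ) (Ioo 0 R) :=
    integrand_integrableOn hθ0.le (continuousOn_const.mul (hcexp.mul (hcpow _ hpp0.le)))
  have hf0 : ∀ r ∈ Ioo (0:ℝ) R, 0 ≤ f r := fun r hr => hpos r ⟨hr.1.le, hr.2.le⟩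
  -- abbreviations
  set Cc := fracInt θ R (fun _ => (1:ℝ)) with hCc
  set E := fracInt θ R (fun r => Real.exp (m * f r ^ (p/(p-1)))) with hEdef
  set L := lamEL m p θ R f with hLdef2
  have hTME : TMint m p θ R f = E := by
    rw [hEdef]
    unfold TMint fracInt
    congr 1
    apply setIntegral_congr_fun measurableSet_Ioo
    intro r hr
    simp only [abs_of_nonneg (hf0 r hr)]
  have hLdef : L = fracInt θ R (fun r => Real.exp (m * f r ^ (p/(p-1))) * f r ^ (p/(p-1))) := rfl
  have hCcon0 : 0 ≤ Cc := fracInt_nonneg hθ0 fun _ _ => zero_le_one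
  -- E is controlled by L
  have hE_le : E ≤ m * L + Cc := by
    have h1 : E ≤ fracInt θ R
        (fun r => m * (Real.exp (m * f r ^ (p/(p-1))) * f r ^ (p/(p-1))) + 1) := by
      apply fracInt_mono hθ0 hintE hintEm
      intro r hr
      have h2 := exp_ineq (y := f r ^ (p/(p-1))) hm
      nlinarith [h2]
    have h2 : fracInt θ R (fun r => m * (Real.exp (m * f r ^ (p/(p-1))) * f r ^ (p/(p-1))) + 1)
        = m * L + Cc := by
      rw [fracInt_add hintMg hint1', fracInt_const_mul, ← hLdef]
    linarith
  have hκL : κ ≤ L := by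
    have h1 : Cc + m * κ ≤ m * L + Cc := le_trans hTMge (hTME ▸ hE_le)
    have h2 : m * κ ≤ m * L := by linarith
    exact le_of_mul_le_mul_left h2 hm
  have hL0 : 0 < L := lt_of_lt_of_le hκ hκL
  -- bound on normP via the eigenvalue
  have hnormP0 : 0 ≤ normP p θ R f :=
    fracInt_nonneg hθ0 fun r _ => Real.rpow_nonneg (abs_nonneg _) _
  have hlamν : 0 < lamInf p α θ R - ν := sub_pos.2 hν
  have hnormP_le : normP p θ R f ≤ 1 / (lamInf p α θ R - ν) := by
    rcases eq_or_lt_of_le hnormP0 with h0 | h0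
    · rw [← h0]; positivity
    · have hfne : f ≠ fun _ => (0:ℝ) := by
        intro hzero
        have hz : normP p θ R f = 0 := by
          rw [hzero]
          unfold normP
          rw [show (fun r : ℝ => |(fun _ => (0:ℝ)) r| ^ p) = fun _ => (0:ℝ) from
            funext fun r => by simp [Real.zero_rpow (show p ≠ 0 by linarith)]]
          simp [fracInt]
        rw [hz] at h0; exact lt_irrefl _ h0
      have hbdd : BddBelow ((fun u => gradP p α R u / normP p θ R u) ''
          {u : ℝ → ℝ | MemX p α θ R u ∧ u ≠ fun _ => 0}) := by
        refine ⟨0, ?_⟩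
        rintro x ⟨w, _, rfl⟩
        exact div_nonneg (fracInt_nonneg hα0 fun r _ => Real.rpow_nonneg (abs_nonneg _) _)
          (fracInt_nonneg hθ0 fun r _ => Real.rpow_nonneg (abs_nonneg _) _)
      have hle : lamInf p α θ R ≤ gradP p α R f / normP p θ R f :=
        csInf_le hbdd ⟨f, ⟨hmem, hfne⟩, rfl⟩
      have hgrad_ge : lamInf p α θ R * normP p θ R f ≤ gradP p α R f := by
        rw [le_div_iff₀ h0] at hle; linarith
      have hX0 : 0 < gradP p α R f - ν * normP p θ R f := by nlinarith
      have hX1 : gradP p α R f - ν * normP p θ R f = 1 := by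
        have h := hH
        unfold Hnu at h
        have h2 := congrArg (fun x : ℝ => x ^ p) h
        rw [← Real.rpow_mul hX0.le, one_div, inv_mul_cancel₀ (show p ≠ 0 by linarith),
          Real.rpow_one, Real.one_rpow] at h2
        exact h2
      rw [le_div_iff₀ hlamν]
      nlinarith
  -- Euler-Lagrange with test function v
  have hELv := hEL v hmemv
  have hLHS : fracInt α R (fun r => |deriv f r| ^ (p-2) * deriv f r * deriv v r)
      = omegaDim α * ∫ r in Ioo r0 R, |deriv f r| ^ p * r ^ α := by
    unfold fracInt
    congr 1
    rw [setIntegral_congr_ae measurableSet_Ioo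
      (g := fun r => (Ioo r0 R).indicator (fun r => |deriv f r| ^ p * r ^ α) r) ?_]
    · rw [setIntegral_indicator measurableSet_Ioo,
        inter_eq_self_of_subset_right (Ioo_subset_Ioo hr0.le le_rfl)]
    · filter_upwards [haes] with r hrs hr
      rcases lt_or_gt_of_ne hrs with h | h
      · rw [hvderiv1 r ⟨hr.1, h⟩, mul_zero, zero_mul]
        by_cases h2 : r ∈ Ioo r0 R
        · rw [indicator_of_mem h2, hfderiv0 r ⟨h2.1, h⟩]
          simp [Real.zero_rpow (show p ≠ 0 by linarith)]
        · rw [indicator_of_notMem h2]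
      · rw [hvderiv2 r ⟨h, hr.2⟩, indicator_of_mem (show r ∈ Ioo r0 R from ⟨lt_of_le_of_lt hr0s h, hr.2⟩),
          habs_cube hp]
  -- pointwise bounds for the two RHS terms
  have hv_le : ∀ r ∈ Ioo (0:ℝ) R, v r ≤ f r0 := fun r _ => min_le_right _ _
  have hT1 : fracInt θ R (fun r => Real.exp (m * f r ^ (p/(p-1))) * f r ^ (1/(p-1)) * v r)
      ≤ f r0 * (E + L) := by
    have h1 : fracInt θ R (fun r => Real.exp (m * f r ^ (p/(p-1))) * f r ^ (1/(p-1)) * v r) ≤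
        fracInt θ R (fun r => f r0 * (Real.exp (m * f r ^ (p/(p-1)))
          + Real.exp (m * f r ^ (p/(p-1))) * f r ^ (p/(p-1)))) := by
      apply fracInt_mono hθ0 hint1 hintB1
      intro r hr
      have hfr := hf0 r hr
      have hexp0 : (0:ℝ) ≤ Real.exp (m * f r ^ (p/(p-1))) := (Real.exp_pos _).le
      have hkey : f r ^ (1/(p-1)) ≤ 1 + f r ^ (p/(p-1)) := by
        rcases le_or_gt (f r) 1 with h | h
        · have h2 := Real.rpow_le_one hfr h (by positivity : (0:ℝ) ≤ 1/(p-1))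
          have h3 : (0:ℝ) ≤ f r ^ (p/(p-1)) := Real.rpow_nonneg hfr _
          linarith
        · have h3 : f r ^ (1/(p-1)) ≤ f r ^ (p/(p-1)) := by
            apply Real.rpow_le_rpow_of_exponent_le h.le
            rw [div_le_div_iff₀ hp1 hp1]
            nlinarith
          linarith
      calc Real.exp (m * f r ^ (p/(p-1))) * f r ^ (1/(p-1)) * v r
          ≤ Real.exp (m * f r ^ (p/(p-1))) * f r ^ (1/(p-1)) * f r0 :=
            mul_le_mul_of_nonneg_left (hv_le r hr) (mul_nonneg hexp0 (Real.rpow_nonneg hfr _))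
        _ ≤ Real.exp (m * f r ^ (p/(p-1))) * (1 + f r ^ (p/(p-1))) * f r0 :=
            mul_le_mul_of_nonneg_right (mul_le_mul_of_nonneg_left hkey hexp0) hc0
        _ = f r0 * (Real.exp (m * f r ^ (p/(p-1)))
              + Real.exp (m * f r ^ (p/(p-1))) * f r ^ (p/(p-1))) := by ring
    have h2 : fracInt θ R (fun r => f r0 * (Real.exp (m * f r ^ (p/(p-1)))
        + Real.exp (m * f r ^ (p/(p-1))) * f r ^ (p/(p-1))))
        = f r0 * (E + L) := by
      rw [fracInt_const_mul, fracInt_add hintE hintL, ← hEdef, ← hLdef]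
    linarith
  have hT2 : fracInt θ R (fun r => f r ^ (p-1) * v r)
      ≤ f r0 * (Cc + normP p θ R f) := by
    have h1 : fracInt θ R (fun r => f r ^ (p-1) * v r) ≤
        fracInt θ R (fun r => f r0 * (1 + |f r| ^ p)) := by
      apply fracInt_mono hθ0 hint4 hintB2
      intro r hr
      have hfr := hf0 r hr
      have hkey : f r ^ (p-1) ≤ 1 + |f r| ^ p := by
        rw [abs_of_nonneg hfr]
        rcases le_or_gt (f r) 1 with h | h
        · have h2 := Real.rpow_le_one hfr h (by linarith : (0:ℝ) ≤ p - 1)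
          have h3 : (0:ℝ) ≤ f r ^ p := Real.rpow_nonneg hfr _
          linarith
        · have h3 : f r ^ (p-1) ≤ f r ^ p := Real.rpow_le_rpow_of_exponent_le h.le (by linarith)
          linarith
      calc f r ^ (p-1) * v r ≤ f r ^ (p-1) * f r0 :=
            mul_le_mul_of_nonneg_left (hv_le r hr) (Real.rpow_nonneg hfr _)
        _ ≤ (1 + |f r| ^ p) * f r0 := mul_le_mul_of_nonneg_right hkey hc0
        _ = f r0 * (1 + |f r| ^ p) := by ring
    have h2 : fracInt θ R (fun r => f r0 * (1 + |f r| ^ p))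
        = f r0 * (Cc + normP p θ R f) := by
      rw [fracInt_const_mul, fracInt_add hint1' hintN, ← hCc]
      rfl
    linarith
  -- assemble
  rw [← hLHS, hELv]
  have hEL2 : E ≤ muC α θ * L + Cc := by nlinarith
  have h4 : Cc ≤ Cc / κ * L := by
    rw [div_mul_eq_mul_div, le_div_iff₀ hκ]
    nlinarith
  have h5 : E + L ≤ (muC α θ + Cc / κ + 1) * L := by nlinarith
  have hLne : L ≠ 0 := ne_of_gt hL0
  have hT1' : 1 / L * fracInt θ R
      (fun r => Real.exp (m * f r ^ (p/(p-1))) * f r ^ (1/(p-1)) * v r)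
      ≤ f r0 * (muC α θ + Cc / κ + 1) := by
    have h6 : fracInt θ R (fun r => Real.exp (m * f r ^ (p/(p-1))) * f r ^ (1/(p-1)) * v r)
        ≤ f r0 * ((muC α θ + Cc / κ + 1) * L) :=
      hT1.trans (mul_le_mul_of_nonneg_left h5 hc0)
    have h7 := mul_le_mul_of_nonneg_left h6 (one_div_pos.2 hL0).le
    have h8 : 1 / L * (f r0 * ((muC α θ + Cc / κ + 1) * L))
        = f r0 * (muC α θ + Cc / κ + 1) := by
      field_simp
    linarith
  have hT2' : ν * fracInt θ R (fun r => f r ^ (p-1) * v r)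
      ≤ ν * (f r0 * (Cc + 1/(lamInf p α θ R - ν))) := by
    apply mul_le_mul_of_nonneg_left _ hν0
    exact hT2.trans (mul_le_mul_of_nonneg_left (by linarith) hc0)
  have hre : f r0 * ((muC α θ + Cc / κ + 1) + ν * (Cc + 1/(lamInf p α θ R - ν)))
      = f r0 * (muC α θ + Cc / κ + 1) + ν * (f r0 * (Cc + 1/(lamInf p α θ R - ν))) := by
    ring
  rw [hre]
  exact add_le_add hT1' hT2'


end ConcAux


set_option maxHeartbeats 1000000

/-- concentration at the origin: if the weak limit of a subcritical extremal
family is `0`, then for every `r₀ > 0`, `∫_{r₀}^R |u_ε'|^p dλ_α → 0` as `ε → 0`. -/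
theorem concentration_at_origin
    (p α θ R ν : ℝ) (hp : 2 ≤ p) (hα : α = p - 1) (hR : 0 < R)
    (hθ : α ≤ θ) (hν0 : 0 ≤ ν) (hν : ν < lamInf p α θ R)
    (u : ℝ → ℝ → ℝ) (hfam : SubcritFamily p α θ R ν u)
    (hw : WeakConvX p α θ R (𝓝[>] (0:ℝ)) (fun ε => u ε) (fun _ => 0)) :
    ∀ r0 : ℝ, 0 < r0 →
      Filter.Tendsto
        (fun ε => omegaDim α * ∫ r in Set.Ioo r0 R, |deriv (u ε) r| ^ p * r ^ α)
        (𝓝[>] (0:ℝ)) (nhds 0) := by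
  intro r0 hr0
  by_cases hr0R : r0 < R
  swap
  · have hempty : Ioo r0 R = ∅ := Ioo_eq_empty hr0R
    have hz : (fun ε => omegaDim α * ∫ r in Set.Ioo r0 R, |deriv (u ε) r| ^ p * r ^ α)
        = fun _ => (0:ℝ) := by
      funext ε
      rw [hempty]
      simp
    rw [hz]
    exact tendsto_const_nhds
  have hp1 : (0:ℝ) < p - 1 := by linarith
  have hp0 : (0:ℝ) < p := by linarith
  have hα0 : 0 < α := by rw [hα]; linarith
  have hθ0 : 0 < θ := lt_of_lt_of_le hα0 hθ
  have hpp0 : 0 < p / (p - 1) := by positivity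
  have hμ0 : 0 < muC α θ := by
    have h1 : 0 < omegaDim α ^ (1/α) := Real.rpow_pos_of_pos (ConcAux.omega_pos hα0) _
    have h2 : 0 < θ + 1 := by linarith
    unfold muC
    exact mul_pos h2 h1
  set Cc := fracInt θ R (fun _ => (1:ℝ)) with hCc
  have hCc0 : 0 < Cc := by
    have h := ConcAux.fracInt_lower (t := θ) (R := R) (a := R/2) (b := R)
      (k := (R/2)^θ) (f := fun _ => (1:ℝ)) hθ0 (by linarith) (by linarith) le_rfl
      (ConcAux.integrand_integrableOn hθ0.le continuousOn_const)
      (fun r hr => mul_nonneg zero_le_one (Real.rpow_nonneg hr.1.le _))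
      (fun r hr => by
        rw [one_mul]
        exact Real.rpow_le_rpow (by linarith) hr.1.le hθ0.le)
    have hω := ConcAux.omega_pos hθ0
    have hk : 0 < (R/2)^θ := Real.rpow_pos_of_pos (by linarith) _
    calc (0:ℝ) < omegaDim θ * ((R/2)^θ * (R - R/2)) :=
        mul_pos hω (mul_pos hk (by linarith))
      _ ≤ Cc := h
  -- the fixed admissible test function u₀
  set M := omegaDim α * R ^ α * R with hM
  have hM0 : 0 < M := by
    have h1 := ConcAux.omega_pos hα0
    have h2 : (0:ℝ) < R ^ α := Real.rpow_pos_of_pos hR _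
    exact mul_pos (mul_pos h1 h2) hR
  set δ := min 1 (1/M) with hδ
  have hδ0 : 0 < δ := lt_min one_pos (by positivity)
  have hδ1 : δ ≤ 1 := min_le_left _ _
  have hδM : δ ≤ 1/M := min_le_right _ _
  set u₀ : ℝ → ℝ := fun r => δ * (R - r) with hu₀
  have hu₀deriv : ∀ t : ℝ, deriv u₀ t = -δ := by
    intro t
    have h : HasDerivAt u₀ (δ * (0 - 1)) t :=
      ((hasDerivAt_const t R).sub (hasDerivAt_id t)).const_mul δ
    simpa using h.deriv
  have hu₀cont : ContinuousOn u₀ (Icc 0 R) :=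
    continuousOn_const.mul (continuousOn_const.sub continuousOn_id)
  have hu₀grad : (fun r : ℝ => |deriv u₀ r| ^ p * r ^ α) = fun r => δ ^ p * r ^ α := by
    funext r
    rw [hu₀deriv r, abs_neg, abs_of_nonneg hδ0.le]
  have hu₀mem : MemX p α θ R u₀ := by
    refine ⟨?_, ?_, ?_⟩
    · intro r hr
      rw [intervalIntegral.integral_congr (g := fun _ => -δ) (fun t _ => hu₀deriv t),
        intervalIntegral.integral_const]
      simp [hu₀]
      ring
    · exact ConcAux.integrand_integrableOn hθ0.le
        (hu₀cont.abs.rpow_const fun x _ => Or.inr hp0.le)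
    · rw [hu₀grad]
      exact ConcAux.integrand_integrableOn hα0.le continuousOn_const
  have hgradu₀ : gradP p α R u₀ ≤ 1 := by
    have hω := ConcAux.omega_pos hα0
    have hRα : (0:ℝ) < R ^ α := Real.rpow_pos_of_pos hR _
    have hbound : (∫ r in Ioo (0:ℝ) R, δ ^ p * r ^ α) ≤ δ ^ p * R ^ α * R := by
      have h1 : (∫ r in Ioo (0:ℝ) R, δ ^ p * r ^ α) ≤ ∫ _ in Ioo (0:ℝ) R, δ ^ p * R ^ α :=
        setIntegral_mono_on (ConcAux.integrand_integrableOn hα0.le continuousOn_const)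
          (integrableOn_const measure_Ioo_lt_top.ne) measurableSet_Ioo
          (fun r hr => mul_le_mul_of_nonneg_left
            (Real.rpow_le_rpow hr.1.le hr.2.le hα0.le) (Real.rpow_nonneg hδ0.le _))
      rw [setIntegral_const, Real.volume_real_Ioo_of_le (by linarith),
        smul_eq_mul] at h1
      calc (∫ r in Ioo (0:ℝ) R, δ ^ p * r ^ α) ≤ (R - 0) * (δ ^ p * R ^ α) := h1
        _ = δ ^ p * R ^ α * R := by ring
    have hδp : δ ^ p ≤ δ := by
      calc δ ^ p ≤ δ ^ (1:ℝ) := Real.rpow_le_rpow_of_exponent_ge hδ0 hδ1 (by linarith)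
        _ = δ := Real.rpow_one δ
    have hδM' : δ * M ≤ 1 := by
      calc δ * M ≤ (1/M) * M := mul_le_mul_of_nonneg_right hδM hM0.le
        _ = 1 := by field_simp
    have hδp0 : 0 ≤ δ ^ p := Real.rpow_nonneg hδ0.le _
    calc gradP p α R u₀ = omegaDim α * ∫ r in Ioo (0:ℝ) R, δ ^ p * r ^ α := by
          unfold gradP fracInt
          rw [hu₀grad]
      _ ≤ omegaDim α * (δ ^ p * R ^ α * R) := mul_le_mul_of_nonneg_left hbound hω.le
      _ ≤ omegaDim α * (δ * R ^ α * R) := by nlinarith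
      _ = δ * M := by rw [hM]; ring
      _ ≤ 1 := hδM'
  have hnormu₀0 : 0 ≤ normP p θ R u₀ :=
    ConcAux.fracInt_nonneg hθ0 fun r _ => Real.rpow_nonneg (abs_nonneg _) _
  have hgradu₀0 : 0 ≤ gradP p α R u₀ :=
    ConcAux.fracInt_nonneg hα0 fun r _ => Real.rpow_nonneg (abs_nonneg _) _
  have hXu₀ : 0 ≤ gradP p α R u₀ - ν * normP p θ R u₀ := by
    rcases eq_or_lt_of_le hnormu₀0 with h0 | h0
    · rw [← h0]
      simpa using hgradu₀0
    · have hfne : u₀ ≠ fun _ => (0:ℝ) := by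
        intro hzero
        have h1 := congrFun hzero 0
        simp only [hu₀, sub_zero] at h1
        nlinarith [hδ0, hR]
      have hbdd : BddBelow ((fun w => gradP p α R w / normP p θ R w) ''
          {w : ℝ → ℝ | MemX p α θ R w ∧ w ≠ fun _ => 0}) := by
        refine ⟨0, ?_⟩
        rintro x ⟨w, _, rfl⟩
        exact div_nonneg (ConcAux.fracInt_nonneg hα0 fun r _ => Real.rpow_nonneg (abs_nonneg _) _)
          (ConcAux.fracInt_nonneg hθ0 fun r _ => Real.rpow_nonneg (abs_nonneg _) _)
      have hle : lamInf p α θ R ≤ gradP p α R u₀ / normP p θ R u₀ :=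
        csInf_le hbdd ⟨u₀, ⟨hu₀mem, hfne⟩, rfl⟩
      rw [le_div_iff₀ h0] at hle
      nlinarith
  have hHu₀ : Hnu p α θ R ν u₀ ≤ 1 := by
    unfold Hnu
    apply Real.rpow_le_one hXu₀ ?_ (by positivity)
    nlinarith
  set κ := fracInt θ R (fun r => |u₀ r| ^ (p/(p-1))) with hκdef
  have hu₀normint : IntegrableOn (fun r => |u₀ r| ^ (p/(p-1)) * r ^ θ) (Ioo 0 R) :=
    ConcAux.integrand_integrableOn hθ0.le (hu₀cont.abs.rpow_const fun x _ => Or.inr hpp0.le)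
  have hκ0 : 0 < κ := by
    have hk := ConcAux.fracInt_lower (a := R/4) (b := R/2)
      (k := (δ*(R/2))^(p/(p-1)) * (R/4)^θ) hθ0 (by linarith) (by linarith) (by linarith)
      hu₀normint
      (fun r hr => mul_nonneg (Real.rpow_nonneg (abs_nonneg _) _) (Real.rpow_nonneg hr.1.le _))
      (fun r hr => by
        have h2 : 0 ≤ δ * (R - r) := by nlinarith [hδ0, hr.2]
        have h1 : δ * (R/2) ≤ |u₀ r| := by
          simp only [hu₀]
          rw [abs_of_nonneg h2]
          nlinarith [hδ0, hr.2]
        have h3 : (R/4)^θ ≤ r ^ θ := Real.rpow_le_rpow (by linarith) hr.1.le hθ0.le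
        exact mul_le_mul (Real.rpow_le_rpow (by positivity) h1 hpp0.le) h3
          (Real.rpow_nonneg (by linarith) _) (Real.rpow_nonneg (abs_nonneg _) _))
    have hω := ConcAux.omega_pos hθ0
    have h1 : 0 < (δ*(R/2))^(p/(p-1)) := Real.rpow_pos_of_pos (by nlinarith [hδ0]) _
    have h2 : 0 < (R/4)^θ := Real.rpow_pos_of_pos (by linarith) _
    calc (0:ℝ) < omegaDim θ * ((δ*(R/2))^(p/(p-1)) * (R/4)^θ * (R/2 - R/4)) :=
        mul_pos hω (mul_pos (mul_pos h1 h2) (by linarith))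
      _ ≤ κ := hk
  have hTMu₀ : ∀ m : ℝ, 0 < m → Cc + m * κ ≤ TMint m p θ R u₀ := by
    intro m hm
    have hB : IntegrableOn (fun r => (m * |u₀ r| ^ (p/(p-1))) * r ^ θ) (Ioo 0 R) :=
      ConcAux.integrand_integrableOn hθ0.le
        (continuousOn_const.mul (hu₀cont.abs.rpow_const fun x _ => Or.inr hpp0.le))
    have h1 : fracInt θ R (fun r => 1 + m * |u₀ r| ^ (p/(p-1))) ≤ TMint m p θ R u₀ := by
      unfold TMint
      apply ConcAux.fracInt_mono hθ0
        (ConcAux.integrand_integrableOn hθ0.le (continuousOn_const.add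
          (continuousOn_const.mul (hu₀cont.abs.rpow_const fun x _ => Or.inr hpp0.le))))
        (ConcAux.integrand_integrableOn hθ0.le
          (Real.continuous_exp.comp_continuousOn (continuousOn_const.mul
            (hu₀cont.abs.rpow_const fun x _ => Or.inr hpp0.le))))
      intro r hr
      have h2 := Real.add_one_le_exp (m * |u₀ r| ^ (p/(p-1)))
      simp only [Function.comp_apply, Pi.add_apply, Pi.mul_apply]
      linarith
    have h2 : fracInt θ R (fun r => 1 + m * |u₀ r| ^ (p/(p-1))) = Cc + m * κ := by
      rw [ConcAux.fracInt_add (ConcAux.integrand_integrableOn hθ0.le continuousOn_const) hB,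
        ConcAux.fracInt_const_mul]
    linarith
  have hev : ∀ᶠ ε in 𝓝[>] (0:ℝ), ε ∈ Ioo (0:ℝ) (muC α θ) :=
    eventually_of_mem (Ioo_mem_nhdsGT_of_mem ⟨le_rfl, hμ0⟩) fun x hx => hx
  have hTMge : ∀ ε ∈ Ioo (0:ℝ) (muC α θ),
      Cc + (muC α θ - ε) * κ ≤ TMint (muC α θ - ε) p θ R (u ε) := by
    intro ε hε
    obtain ⟨hmemε, hC1ε, hposε, hmonoε, hHε, hTMε, hELε⟩ := hfam ε hε
    have hm : 0 < muC α θ - ε := sub_pos.2 hε.2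
    have hmemS : TMint (muC α θ - ε) p θ R u₀ ∈ Sset p α θ R ν (muC α θ - ε) :=
      ⟨u₀, ⟨hu₀mem, hHu₀⟩, rfl⟩
    have hbdd : BddAbove (Sset p α θ R ν (muC α θ - ε)) := by
      by_contra hnb
      have h0 : Ssub p α θ R ν ε = 0 := Real.sSup_of_not_bddAbove hnb
      have h2 : Cc ≤ TMint (muC α θ - ε) p θ R (u ε) := by
        unfold TMint
        apply ConcAux.fracInt_mono hθ0
          (ConcAux.integrand_integrableOn hθ0.le continuousOn_const)
          (ConcAux.integrand_integrableOn hθ0.le (Real.continuous_exp.comp_continuousOn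
            (continuousOn_const.mul ((hC1ε.continuousOn.abs).rpow_const
              fun x _ => Or.inr hpp0.le))))
        intro r hr
        simp only [Function.comp_apply, Pi.mul_apply]
        exact Real.one_le_exp (by positivity)
      rw [hTMε, h0] at h2
      linarith
    calc Cc + (muC α θ - ε) * κ ≤ TMint (muC α θ - ε) p θ R u₀ := hTMu₀ _ hm
      _ ≤ Ssub p α θ R ν ε := le_csSup hbdd hmemS
      _ = TMint (muC α θ - ε) p θ R (u ε) := hTMε.symm
  -- Step A: pointwise decay of u ε at r0
  have hdecay : Tendsto (fun ε => u ε r0) (𝓝[>] (0:ℝ)) (nhds 0) := by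
    have hppne : p / (p-1) ≠ 0 := ne_of_gt hpp0
    have hg0 : IntegrableOn (fun r => |(fun _ => (0:ℝ)) r| ^ (p/(p-1)) * r ^ α) (Ioo 0 R) := by
      rw [show (fun r : ℝ => |(fun _ => (0:ℝ)) r| ^ (p/(p-1)) * r ^ α) = fun _ => (0:ℝ) from
        funext fun r => by simp [Real.zero_rpow hppne]]
      exact integrableOn_zero
    have hh0 : IntegrableOn
        (fun r => |Set.indicator (Ioo (r0/2) r0) (fun _ => (1:ℝ)) r| ^ (p/(p-1)) * r ^ θ)
        (Ioo 0 R) := by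
      apply Measure.integrableOn_of_bounded (M := R ^ θ) (ne_of_lt measure_Ioo_lt_top)
        (ConcAux.meas_ind_aux _ _ _ _).aestronglyMeasurable
      rw [ae_restrict_iff' measurableSet_Ioo]
      apply Filter.Eventually.of_forall
      intro r hr
      have h1 : |Set.indicator (Ioo (r0/2) r0) (fun _ => (1:ℝ)) r| ≤ 1 := by
        rw [Set.indicator_apply]
        split_ifs <;> simp
      have h2 : |Set.indicator (Ioo (r0/2) r0) (fun _ => (1:ℝ)) r| ^ (p/(p-1)) ≤ 1 :=
        Real.rpow_le_one (abs_nonneg _) h1 hpp0.le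
      have h3 : r ^ θ ≤ R ^ θ := Real.rpow_le_rpow hr.1.le hr.2.le hθ0.le
      have h4 : (0:ℝ) ≤ r ^ θ := Real.rpow_nonneg hr.1.le _
      have h5 : (0:ℝ) ≤ |Set.indicator (Ioo (r0/2) r0) (fun _ => (1:ℝ)) r| ^ (p/(p-1)) :=
        Real.rpow_nonneg (abs_nonneg _) _
      rw [Real.norm_eq_abs, abs_of_nonneg (mul_nonneg h5 h4)]
      nlinarith
    have hW := hw (fun _ => 0) (Set.indicator (Ioo (r0/2) r0) (fun _ => (1:ℝ))) hg0 hh0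
    simp only [mul_zero, zero_mul, integral_zero, zero_add, add_zero] at hW
    have hWint : ∀ w : ℝ → ℝ,
        (∫ r in Ioo (0:ℝ) R, w r * Set.indicator (Ioo (r0/2) r0) (fun _ => (1:ℝ)) r * r ^ θ)
        = ∫ r in Ioo (r0/2) r0, w r * r ^ θ := by
      intro w
      have hsub : Ioo (r0/2) r0 ⊆ Ioo 0 R := fun x hx => ⟨by linarith [hx.1], by linarith [hx.2]⟩
      rw [show (fun r => w r * Set.indicator (Ioo (r0/2) r0) (fun _ => (1:ℝ)) r * r ^ θ)
          = fun r => Set.indicator (Ioo (r0/2) r0) (fun r => w r * r ^ θ) r from ?_]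
      · rw [setIntegral_indicator measurableSet_Ioo, inter_eq_self_of_subset_right hsub]
      · funext r
        by_cases hmem : r ∈ Ioo (r0/2) r0
        · rw [Set.indicator_of_mem hmem, Set.indicator_of_mem hmem]
          ring
        · rw [Set.indicator_of_notMem hmem, Set.indicator_of_notMem hmem]
          ring
    rw [show (fun ε => ∫ r in Ioo (0:ℝ) R,
        u ε r * Set.indicator (Ioo (r0/2) r0) (fun _ => (1:ℝ)) r * r ^ θ)
        = fun ε => ∫ r in Ioo (r0/2) r0, u ε r * r ^ θ from funext fun ε => hWint (u ε)] at hW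
    set A := (r0/2) ^ θ * (r0/2) with hA
    have hA0 : 0 < A := by
      have h1 : (0:ℝ) < (r0/2)^θ := Real.rpow_pos_of_pos (by linarith) _
      rw [hA]
      nlinarith
    have hnn : ∀ᶠ ε in 𝓝[>] (0:ℝ), 0 ≤ u ε r0 := by
      filter_upwards [hev] with ε hε
      exact (hfam ε hε).2.2.1 r0 ⟨hr0.le, hr0R.le⟩
    have hbound : ∀ᶠ ε in 𝓝[>] (0:ℝ),
        u ε r0 ≤ A⁻¹ * ∫ r in Ioo (r0/2) r0, u ε r * r ^ θ := by
      filter_upwards [hev] with ε hε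
      obtain ⟨hmemε, hC1ε, hposε, hmonoε, _, _, _⟩ := hfam ε hε
      have hintf : IntegrableOn (fun r => u ε r * r ^ θ) (Ioo (r0/2) r0) := by
        apply (ContinuousOn.integrableOn_Icc ?_).mono_set Ioo_subset_Icc_self
        exact (hC1ε.continuousOn.mono (Icc_subset_Icc (by linarith) hr0R.le)).mul
          (continuousOn_id.rpow_const fun x _ => Or.inr hθ0.le)
      have hlow : u ε r0 * A ≤ ∫ r in Ioo (r0/2) r0, u ε r * r ^ θ := by
        have h1 := setIntegral_mono_on (f := fun _ => u ε r0 * (r0/2) ^ θ)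
          (integrableOn_const measure_Ioo_lt_top.ne)
          hintf measurableSet_Ioo ?_
        · rw [setIntegral_const, Real.volume_real_Ioo_of_le (by linarith),
            smul_eq_mul] at h1
          calc u ε r0 * A = (r0 - r0/2) * (u ε r0 * (r0/2) ^ θ) := by rw [hA]; ring
            _ ≤ _ := h1
        · intro r hr
          have h2 : u ε r0 ≤ u ε r :=
            hmonoε ⟨by linarith [hr.1], by linarith [hr.2]⟩ ⟨hr0.le, hr0R.le⟩ hr.2.le
          have h3 : (r0/2) ^ θ ≤ r ^ θ := Real.rpow_le_rpow (by linarith) hr.1.le hθ0.le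
          exact mul_le_mul h2 h3 (Real.rpow_nonneg (by linarith) _)
            (hposε r ⟨by linarith [hr.1], by linarith [hr.2]⟩)
      have h6 : u ε r0 = (u ε r0 * A) / A := by field_simp
      rw [h6, div_le_iff₀ hA0, inv_mul_eq_div, div_mul_eq_mul_div, le_div_iff₀ hA0]
      nlinarith [hlow, hA0]
    refine squeeze_zero' hnn hbound ?_
    have h7 := hW.const_mul A⁻¹
    simpa using h7
  -- conclusion
  set K := (muC α θ + Cc / κ + 1) + ν * (Cc + 1 / (lamInf p α θ R - ν)) with hK
  have hnn2 : ∀ᶠ ε in 𝓝[>] (0:ℝ),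
      0 ≤ omegaDim α * ∫ r in Set.Ioo r0 R, |deriv (u ε) r| ^ p * r ^ α := by
    apply Filter.Eventually.of_forall
    intro ε
    exact mul_nonneg (ConcAux.omega_pos hα0).le (setIntegral_nonneg measurableSet_Ioo
      fun r hr => mul_nonneg (Real.rpow_nonneg (abs_nonneg _) _)
        (Real.rpow_nonneg (by linarith [hr.1, hr0] : (0:ℝ) ≤ r) _))
  have hbound2 : ∀ᶠ ε in 𝓝[>] (0:ℝ),
      omegaDim α * (∫ r in Set.Ioo r0 R, |deriv (u ε) r| ^ p * r ^ α) ≤ u ε r0 * K := by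
    filter_upwards [hev] with ε hε
    obtain ⟨hmemε, hC1ε, hposε, hmonoε, hHε, hTMε, hELε⟩ := hfam ε hε
    exact ConcAux.key p α θ R ν (muC α θ - ε) r0 hp hα hR hθ hν0 hν hr0 hr0R
      (sub_pos.2 hε.2) (by linarith [hε.1]) κ hκ0 (u ε) hmemε hC1ε hposε hmonoε hHε
      (hTMge ε hε) hELε
  refine squeeze_zero' hnn2 hbound2 ?_
  have h8 := hdecay.mul_const K
  simpa using h8
end

section
/- Digamma asymptotics of a Beta-type integral: Let x > 1. Then lim_{a→∞} a·(∫_0^a s^{x−1}/(1+s)^x ds − ln(1+a) + Ψ(x) + γ) = x − 1; in particular, as a → ∞, ∫_0^a s^{x−1}/(1+s)^x ds = ln(1+a) − (Ψ(x) + γ) + O(1/a). -/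
open MeasureTheory Filter Set Topology Asymptotics

section AuxBeta

/-! Auxiliary lemmas -/

lemma aux_tendsto_one_add_atTop : Filter.Tendsto (fun s : ℝ => 1 + s) atTop atTop :=
  tendsto_atTop_add_const_left atTop 1 tendsto_id

lemma aux_tendsto_ratio : Filter.Tendsto (fun s : ℝ => s / (1+s)) atTop (𝓝 1) := by
  have h3 : Filter.Tendsto (fun s : ℝ => 1 - (1+s)⁻¹) atTop (𝓝 1) := by
    simpa using tendsto_const_nhds.sub (tendsto_inv_atTop_zero.comp aux_tendsto_one_add_atTop)
  apply h3.congr'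
  filter_upwards [eventually_gt_atTop 0] with s hs
  have h1s : (0:ℝ) < 1 + s := by linarith
  field_simp
  ring

lemma aux_phi_integral (c : ℝ) (hc : 0 < c) :
    IntegrableOn (fun s : ℝ => s ^ (c-1) / (1+s) ^ (c+1)) (Ioi 0) ∧
    (∫ s in Ioi (0:ℝ), s ^ (c-1) / (1+s) ^ (c+1)) = 1 / c := by
  set F : ℝ → ℝ := fun s => (s / (1+s)) ^ c / c with hF
  have hderiv : ∀ s ∈ Ioi (0:ℝ), HasDerivAt F (s ^ (c-1) / (1+s) ^ (c+1)) s := by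
    intro s hs
    have hs0 : (0:ℝ) < s := hs
    have h1s : (0:ℝ) < 1 + s := by linarith
    have hr : HasDerivAt (fun s : ℝ => s / (1+s)) (1 / (1+s)^2) s := by
      have h := (hasDerivAt_id s).div ((hasDerivAt_id s).const_add 1) h1s.ne'
      simp only [id_eq, one_mul, mul_one] at h
      refine h.congr_deriv (Eq.symm ?_)
      ring
    have hrpos : (0:ℝ) < s / (1+s) := by positivity
    have h2 : HasDerivAt (fun y : ℝ => y ^ c) (c * (s/(1+s)) ^ (c-1)) (s/(1+s)) :=
      Real.hasDerivAt_rpow_const (Or.inl hrpos.ne')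
    have h3 := (h2.comp s hr).div_const c
    refine h3.congr_deriv (Eq.symm ?_)
    rw [Real.div_rpow hs0.le h1s.le]
    rw [show c + 1 = (c - 1) + ((2:ℕ):ℝ) by push_cast; ring, Real.rpow_add h1s,
      Real.rpow_natCast]
    field_simp
  have hcont : ContinuousWithinAt F (Ici 0) 0 := by
    apply ContinuousAt.continuousWithinAt
    have h1 : ContinuousAt (fun s : ℝ => s / (1+s)) 0 := by
      apply ContinuousAt.div continuousAt_id (by fun_prop)
      norm_num
    exact (h1.rpow_const (Or.inr hc.le)).div_const c
  have hpos : ∀ s ∈ Ioi (0:ℝ), 0 ≤ s ^ (c-1) / (1+s) ^ (c+1) := by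
    intro s hs
    have hs0 : (0:ℝ) < s := hs
    positivity
  have htend : Tendsto F atTop (𝓝 (1/c)) := by
    have h2 : ContinuousAt (fun y : ℝ => y ^ c) 1 :=
      Real.continuousAt_rpow_const _ _ (Or.inl one_ne_zero)
    have h3 := (h2.tendsto.comp aux_tendsto_ratio).div_const c
    simpa using h3
  have hF0 : F 0 = 0 := by
    simp [hF, Real.zero_rpow hc.ne']
  constructor
  · exact integrableOn_Ioi_deriv_of_nonneg hcont hderiv hpos htend
  · rw [integral_Ioi_of_hasDerivAt_of_nonneg hcont hderiv hpos htend, hF0, sub_zero]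

lemma aux_pow_tail_integral (c a : ℝ) (hc : 0 < c) (ha : 0 ≤ a) :
    IntegrableOn (fun s : ℝ => (1+s) ^ (-(c+1))) (Ioi a) ∧
    (∫ s in Ioi a, (1+s) ^ (-(c+1))) = (1+a) ^ (-c) / c := by
  set F : ℝ → ℝ := fun s => -((1+s) ^ (-c)) / c with hF
  have hderiv : ∀ s ∈ Ioi a, HasDerivAt F ((1+s) ^ (-(c+1))) s := by
    intro s hs
    have h1s : (0:ℝ) < 1 + s := by have := lt_of_le_of_lt ha hs; linarith
    have h2 : HasDerivAt (fun y : ℝ => y ^ (-c)) (-c * (1+s) ^ (-c-1)) (1+s) :=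
      Real.hasDerivAt_rpow_const (Or.inl h1s.ne')
    have h3 := ((h2.comp s ((hasDerivAt_id s).const_add 1)).neg).div_const c
    refine h3.congr_deriv (Eq.symm ?_)
    simp only [id_eq, mul_one]
    rw [show -(c+1) = -c-1 by ring]
    field_simp
  have hcont : ContinuousWithinAt F (Ici a) a := by
    apply ContinuousAt.continuousWithinAt
    have h1s : (0:ℝ) < 1 + a := by linarith
    have h1 : ContinuousAt (fun s : ℝ => 1 + s) a := by fun_prop
    exact ((h1.rpow_const (Or.inl h1s.ne')).neg).div_const c
  have hpos : ∀ s ∈ Ioi a, 0 ≤ (1+s) ^ (-(c+1)) := by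
    intro s hs
    have h1s : (0:ℝ) < 1 + s := by have := lt_of_le_of_lt ha hs; linarith
    positivity
  have htend : Tendsto F atTop (𝓝 0) := by
    have h1 : Tendsto (fun s : ℝ => ((1+s) ^ (-c) : ℝ)) atTop (𝓝 0) :=
      (tendsto_rpow_neg_atTop hc).comp aux_tendsto_one_add_atTop
    simpa using (h1.neg).div_const c
  constructor
  · exact integrableOn_Ioi_deriv_of_nonneg hcont hderiv hpos htend
  · rw [integral_Ioi_of_hasDerivAt_of_nonneg hcont hderiv hpos htend, hF]
    simp only [zero_sub, neg_neg, neg_div, sub_neg_eq_add, zero_add]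

lemma aux_one_sub_rpow_lb (p u : ℝ) (hp : 0 < p) (hu : 0 < u) (hu1 : u < 1) :
    p*u - p^2*u^2 ≤ 1 - (1-u)^p := by
  have h1u : (0:ℝ) < 1 - u := by linarith
  have hlog : Real.log (1-u) ≤ -u := by
    have := Real.log_le_sub_one_of_pos h1u
    linarith
  have h2 : (1-u)^p ≤ Real.exp (-(p*u)) := by
    rw [Real.rpow_def_of_pos h1u]
    apply Real.exp_le_exp.2
    nlinarith
  have h3 : Real.exp (-(p*u)) ≤ 1/(1+p*u) := by
    rw [Real.exp_neg]
    rw [div_eq_inv_mul, mul_one]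
    apply inv_anti₀ (by positivity)
    have := Real.add_one_le_exp (p*u)
    linarith
  have h4 : 1/(1+p*u) ≤ 1 - p*u + p^2*u^2 := by
    rw [div_le_iff₀ (by positivity)]
    nlinarith [pow_pos (mul_pos hp hu) 3]
  nlinarith

lemma aux_one_sub_rpow_ub (p u : ℝ) (hp : 0 < p) (hu : 0 < u) (hu2 : u ≤ 1/2) :
    1 - (1-u)^p ≤ p*u + 2*p*u^2 := by
  have h1u : (0:ℝ) < 1 - u := by linarith
  have hlog : -(u + 2*u^2) ≤ Real.log (1-u) := by
    have h5 := Real.log_le_sub_one_of_pos (show (0:ℝ) < (1-u)⁻¹ by positivity)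
    rw [Real.log_inv] at h5
    have h6 : (1-u)⁻¹ - 1 = u/(1-u) := by field_simp; ring
    have h7 : u/(1-u) ≤ u + 2*u^2 := by
      rw [div_le_iff₀ h1u]
      nlinarith
    nlinarith
  have h2 : Real.exp (-(p*(u+2*u^2))) ≤ (1-u)^p := by
    rw [Real.rpow_def_of_pos h1u]
    apply Real.exp_le_exp.2
    nlinarith
  have h3 : 1 - p*(u+2*u^2) ≤ Real.exp (-(p*(u+2*u^2))) := by
    have := Real.add_one_le_exp (-(p*(u+2*u^2)))
    linarith
  nlinarith

noncomputable def phiA (c s : ℝ) : ℝ := s ^ (c-1) / (1+s) ^ (c+1)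

lemma aux_phiA_eq (c s : ℝ) (hs : 0 < s) :
    phiA c s = (s/(1+s)) ^ c / (s * (1+s)) := by
  have h1s : (0:ℝ) < 1 + s := by linarith
  rw [phiA, Real.div_rpow hs.le h1s.le, Real.rpow_sub hs c 1, Real.rpow_add h1s c 1,
    Real.rpow_one, Real.rpow_one]
  have h2 : (0:ℝ) < s ^ c := Real.rpow_pos_of_pos hs c
  have h3 : (0:ℝ) < (1+s) ^ c := Real.rpow_pos_of_pos h1s c
  field_simp
  try ring

lemma aux_g_tsum (x s : ℝ) (hs : 0 < s) :
    ∑' k : ℕ, (phiA ((k:ℝ)+1) s - phiA (x+k) s) = 1/(1+s) - s^(x-1)/(1+s)^x := by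
  have h1s : (0:ℝ) < 1 + s := by linarith
  set r : ℝ := s/(1+s) with hrdef
  have hr0 : 0 < r := by positivity
  have hr1 : r < 1 := by rw [hrdef, div_lt_one h1s]; linarith
  have hgeo : HasSum (fun k : ℕ => r ^ (k:ℕ)) ((1-r)⁻¹) :=
    hasSum_geometric_of_lt_one hr0.le hr1
  have e1 : (fun k : ℕ => r ^ ((k:ℝ)+1)) = fun k : ℕ => r ^ (k:ℕ) * r := by
    funext k
    rw [Real.rpow_add hr0, Real.rpow_one, Real.rpow_natCast]
  have hsum1 : HasSum (fun k : ℕ => r ^ ((k:ℝ)+1)) ((1-r)⁻¹ * r) :=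
    e1 ▸ hgeo.mul_right r
  have e2 : (fun k : ℕ => r ^ (x+(k:ℝ))) = fun k : ℕ => r ^ x * r ^ (k:ℕ) := by
    funext k
    rw [Real.rpow_add hr0, Real.rpow_natCast]
  have hsum2 : HasSum (fun k : ℕ => r ^ (x+(k:ℝ))) (r ^ x * (1-r)⁻¹) :=
    e2 ▸ hgeo.mul_left (r ^ x)
  have hsum3 : HasSum (fun k : ℕ => (r ^ ((k:ℝ)+1) - r ^ (x+(k:ℝ))) / (s*(1+s)))
      (((1-r)⁻¹ * r - r ^ x * (1-r)⁻¹) / (s*(1+s))) := (hsum1.sub hsum2).div_const _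
  have e3 : (fun k : ℕ => (r ^ ((k:ℝ)+1) - r ^ (x+(k:ℝ))) / (s*(1+s)))
      = fun k : ℕ => phiA ((k:ℝ)+1) s - phiA (x+(k:ℝ)) s := by
    funext k
    rw [aux_phiA_eq _ _ hs, aux_phiA_eq _ _ hs, sub_div]
  rw [← e3, hsum3.tsum_eq]
  have h1r : 1 - r = (1+s)⁻¹ := by
    rw [hrdef]; field_simp; ring
  have hrx : r ^ x = (s ^ (x-1) * s) / (1+s) ^ x := by
    rw [hrdef, Real.div_rpow hs.le h1s.le, Real.rpow_sub hs x 1, Real.rpow_one]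
    have h2 : (0:ℝ) < s ^ x := Real.rpow_pos_of_pos hs x
    field_simp
  rw [h1r, hrx, hrdef]
  have h3 : (0:ℝ) < (1+s) ^ x := Real.rpow_pos_of_pos h1s x
  field_simp

lemma aux_digamma_add_em (x : ℝ) (hx : 1 < x) {S : ℝ}
    (hS : HasSum (fun k : ℕ => 1/((k:ℝ)+1) - 1/(x+k)) S) :
    digamma x + Real.eulerMascheroniConstant = S := by
  have hx0 : 0 < x := by linarith
  set f := Real.log ∘ Real.Gamma with hf
  have hder : ∀ {y : ℝ}, 0 < y → DifferentiableAt ℝ f y := by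
    intro y hy
    refine ((Real.differentiableAt_Gamma ?_).log (Real.Gamma_ne_zero ?_)) <;>
      exact fun m => ((neg_nonpos.mpr m.cast_nonneg).trans_lt hy).ne'
  have hdig : digamma x = deriv f x := by
    rw [hf, Function.comp_def, deriv.log (Real.differentiableAt_Gamma
      (fun m => ((neg_nonpos.mpr m.cast_nonneg).trans_lt hx0).ne'))
      (Real.Gamma_pos_of_pos hx0).ne']
    rfl
  have h_rec : ∀ y : ℝ, 0 < y → f (y + 1) = f y + Real.log y := by
    intro y hy
    simp only [hf, Function.comp_apply, Real.Gamma_add_one hy.ne',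
      Real.log_mul hy.ne' (Real.Gamma_pos_of_pos hy).ne', add_comm]
  have hder_rec : ∀ y : ℝ, 0 < y → deriv f (y + 1) = deriv f y + 1 / y := by
    intro y hy
    rw [← deriv_comp_add_const, one_div, ← Real.deriv_log,
      ← deriv_add (hder hy) (Real.differentiableAt_log hy.ne')]
    apply Filter.EventuallyEq.deriv_eq
    filter_upwards [eventually_gt_nhds hy] using h_rec
  have hnat : ∀ n : ℕ, deriv f (x + n) = deriv f x + ∑ k ∈ Finset.range n, 1 / (x + k) := by
    intro n
    induction n with
    | zero => simp
    | succ n ih =>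
      have : x + (n + 1 : ℕ) = (x + n) + 1 := by push_cast; ring
      rw [this, hder_rec _ (by positivity), ih, Finset.sum_range_succ]
      push_cast
      ring
  have hc : ConvexOn ℝ (Set.Ioi 0) f := Real.convexOn_log_Gamma
  have hub : ∀ n : ℕ, deriv f (x + n) ≤ Real.log (x + n) := by
    intro n
    have h1 : (0:ℝ) < x + n := by positivity
    have h2 : x + (n:ℝ) < x + n + 1 := by linarith
    refine (hc.deriv_le_slope (Set.mem_Ioi.2 h1) (Set.mem_Ioi.2 (by linarith)) h2
      (hder h1)).trans (le_of_eq ?_)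
    rw [slope_def_field, h_rec _ h1]
    field_simp
    ring
  have hlb : ∀ n : ℕ, Real.log (x + n - 1) ≤ deriv f (x + n) := by
    intro n
    have h0 : (0:ℝ) < x + n - 1 := by
      have : (0:ℝ) ≤ n := n.cast_nonneg
      linarith
    have h2 : x + (n:ℝ) - 1 < x + n := by linarith
    refine le_trans (le_of_eq ?_) (hc.slope_le_deriv (Set.mem_Ioi.2 h0)
      (Set.mem_Ioi.2 (by linarith)) h2 (hder (by linarith)))
    rw [slope_def_field]
    have : x + (n:ℝ) = (x + n - 1) + 1 := by ring
    rw [this, h_rec _ h0]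
    field_simp
    ring_nf
  set Sn : ℕ → ℝ := fun n => ∑ k ∈ Finset.range n, (1/((k:ℝ)+1) - 1/(x+k)) with hSn
  have hSnt : Tendsto Sn atTop (𝓝 S) := hS.tendsto_sum_nat
  have hsum_split : ∀ n : ℕ, Sn n = (harmonic n : ℝ) - ∑ k ∈ Finset.range n, 1/(x+k) := by
    intro n
    rw [hSn]
    simp only [Finset.sum_sub_distrib]
    congr 1
    rw [harmonic]
    push_cast
    exact Finset.sum_congr rfl fun k _ => by rw [one_div, add_comm]
  have hγ : Tendsto (fun n : ℕ => (harmonic n : ℝ) - Real.log n) atTop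
      (𝓝 Real.eulerMascheroniConstant) := Real.tendsto_harmonic_sub_log
  have hlog0 : ∀ c : ℝ, 0 ≤ c → Tendsto (fun n : ℕ => Real.log (c + n) - Real.log n)
      atTop (𝓝 0) := by
    intro c hc0
    have h1 : Tendsto (fun n : ℕ => c / n + 1) atTop (𝓝 1) := by
      simpa using (tendsto_const_nhds.div_atTop
        (tendsto_natCast_atTop_atTop (R := ℝ))).add (tendsto_const_nhds (x := (1:ℝ)))
    have h2 : Tendsto (fun n : ℕ => Real.log (c / n + 1)) atTop (𝓝 0) := by
      have := (Real.continuousAt_log (by norm_num : (1:ℝ) ≠ 0)).tendsto.comp h1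
      simpa [Function.comp_def] using this
    apply h2.congr'
    filter_upwards [eventually_gt_atTop 0] with n hn
    have hn' : (0:ℝ) < n := by exact_mod_cast hn
    rw [show c / (n:ℝ) + 1 = (c + n) / n by field_simp,
      Real.log_div (by positivity) hn'.ne']
  have hub' : deriv f x ≤ S - Real.eulerMascheroniConstant := by
    have htend : Tendsto (fun n : ℕ => Sn n - ((harmonic n : ℝ) - Real.log n)
        + (Real.log (x + n) - Real.log n)) atTop (𝓝 (S - Real.eulerMascheroniConstant)) := by
      simpa using (hSnt.sub hγ).add (hlog0 x hx0.le)
    refine ge_of_tendsto htend ?_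
    filter_upwards with n
    have h1 := hub n
    rw [hnat n] at h1
    have h2 := hsum_split n
    linarith
  have hlb' : S - Real.eulerMascheroniConstant ≤ deriv f x := by
    have htend : Tendsto (fun n : ℕ => Sn n - ((harmonic n : ℝ) - Real.log n)
        + (Real.log ((x-1) + n) - Real.log n)) atTop
        (𝓝 (S - Real.eulerMascheroniConstant)) := by
      simpa using (hSnt.sub hγ).add (hlog0 (x-1) (by linarith))
    refine le_of_tendsto htend ?_
    filter_upwards with n
    have h1 := hlb n
    rw [hnat n] at h1
    have h2 := hsum_split n
    have : x - 1 + (n:ℝ) = x + n - 1 := by ring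
    rw [this]
    linarith
  rw [hdig]
  linarith

end AuxBeta


-- g in u-form
lemma aux_g_form (x s : ℝ) (hs : 0 < s) :
    1/(1+s) - s^(x-1)/(1+s)^x = (1+s)⁻¹ * (1 - (1 - (1+s)⁻¹)^(x-1)) := by
  have h1s : (0:ℝ) < 1 + s := by linarith
  have e1 : 1 - (1+s)⁻¹ = s/(1+s) := by field_simp; ring
  have ex : x - 1 + 1 = x := by ring
  have e2 : (1+s)^x = (1+s)^(x-1) * (1+s) := by
    conv_lhs => rw [← ex]
    rw [Real.rpow_add h1s, Real.rpow_one]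
  rw [e1, Real.div_rpow hs.le h1s.le, e2]
  have h2 : (0:ℝ) < s ^ (x-1) := Real.rpow_pos_of_pos hs _
  have h3 : (0:ℝ) < (1+s) ^ (x-1) := Real.rpow_pos_of_pos h1s _
  field_simp
  try ring
  try exact Or.inl trivial

lemma aux_rpow2 (s : ℝ) (hs : 0 ≤ s) : (1+s) ^ (-(1+1) : ℝ) = ((1+s)⁻¹)^2 := by
  have h1s : (0:ℝ) < 1 + s := by linarith
  rw [show (-(1+1):ℝ) = -((2:ℕ):ℝ) by norm_num, Real.rpow_neg h1s.le, Real.rpow_natCast,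
    inv_pow]

lemma aux_rpow3 (s : ℝ) (hs : 0 ≤ s) : (1+s) ^ (-(2+1) : ℝ) = ((1+s)⁻¹)^3 := by
  have h1s : (0:ℝ) < 1 + s := by linarith
  rw [show (-(2+1):ℝ) = -((3:ℕ):ℝ) by norm_num, Real.rpow_neg h1s.le, Real.rpow_natCast,
    inv_pow]

lemma aux_hg_ub2' (x : ℝ) (hx : 1 < x) : ∀ s : ℝ, 1 ≤ s →
    1/(1+s) - s^(x-1)/(1+s)^x ≤ (x-1) * ((1+s)⁻¹)^2 + 2*(x-1) * ((1+s)⁻¹)^3 := by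
  have hp : (0:ℝ) < x - 1 := by linarith
  intro s hs1
  have hs0 : (0:ℝ) < s := by linarith
  have h1s : (0:ℝ) < 1 + s := by linarith
  set u : ℝ := (1+s)⁻¹ with hu
  have hu0 : (0:ℝ) < u := by positivity
  have hu2 : u ≤ 1/2 := by
    rw [hu, show (1:ℝ)/2 = 2⁻¹ by norm_num]
    apply inv_anti₀ (by norm_num)
    linarith
  have hub := aux_one_sub_rpow_ub (x-1) u hp hu0 hu2
  rw [aux_g_form x s hs0]
  nlinarith

lemma aux_hg_lb2' (x : ℝ) (hx : 1 < x) : ∀ s : ℝ, 1 ≤ s →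
    (x-1) * ((1+s)⁻¹)^2 - (x-1)^2 * ((1+s)⁻¹)^3 ≤ 1/(1+s) - s^(x-1)/(1+s)^x := by
  have hp : (0:ℝ) < x - 1 := by linarith
  intro s hs1
  have hs0 : (0:ℝ) < s := by linarith
  have h1s : (0:ℝ) < 1 + s := by linarith
  set u : ℝ := (1+s)⁻¹ with hu
  have hu0 : (0:ℝ) < u := by positivity
  have hu1 : u < 1 := by
    rw [hu, inv_lt_one_iff₀]; right; linarith
  have hlb := aux_one_sub_rpow_lb (x-1) u hp hu0 hu1
  rw [aux_g_form x s hs0]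
  nlinarith

-- the master fact about g
lemma aux_g_master (x : ℝ) (hx : 1 < x) :
    IntegrableOn (fun s : ℝ => 1/(1+s) - s^(x-1)/(1+s)^x) (Ioi 0) ∧
    digamma x + Real.eulerMascheroniConstant
      = ∫ s in Ioi (0:ℝ), (1/(1+s) - s^(x-1)/(1+s)^x) := by
  have hp : (0:ℝ) < x - 1 := by linarith
  set g : ℝ → ℝ := fun s => 1/(1+s) - s^(x-1)/(1+s)^x with hg
  -- term facts
  have hxk : ∀ k : ℕ, (0:ℝ) < x + k := fun k => by positivity
  have hk1 : ∀ k : ℕ, (0:ℝ) < (k:ℝ) + 1 := fun k => by positivity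
  have htk_int : ∀ k : ℕ,
      IntegrableOn (fun s => phiA ((k:ℝ)+1) s - phiA (x+k) s) (Ioi (0:ℝ)) := fun k =>
    ((aux_phi_integral ((k:ℝ)+1) (hk1 k)).1).sub ((aux_phi_integral (x+k) (hxk k)).1)
  have htk_val : ∀ k : ℕ,
      (∫ s in Ioi (0:ℝ), (phiA ((k:ℝ)+1) s - phiA (x+k) s)) = 1/((k:ℝ)+1) - 1/(x+k) := by
    intro k
    simp only [phiA]
    rw [integral_sub ((aux_phi_integral ((k:ℝ)+1) (hk1 k)).1)
      ((aux_phi_integral (x+k) (hxk k)).1)]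
    rw [(aux_phi_integral ((k:ℝ)+1) (hk1 k)).2, (aux_phi_integral (x+k) (hxk k)).2]
  have htk_nn : ∀ k : ℕ, ∀ s ∈ Ioi (0:ℝ), 0 ≤ phiA ((k:ℝ)+1) s - phiA (x+k) s := by
    intro k s hs
    have hs0 : (0:ℝ) < s := hs
    have h1s : (0:ℝ) < 1 + s := by linarith
    rw [aux_phiA_eq _ _ hs0, aux_phiA_eq _ _ hs0, ← sub_div]
    apply div_nonneg _ (by positivity)
    have hr0 : (0:ℝ) < s/(1+s) := by positivity
    have hr1 : s/(1+s) ≤ 1 := by rw [div_le_one h1s]; linarith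
    have := Real.rpow_le_rpow_of_exponent_ge hr0 hr1 (show (k:ℝ)+1 ≤ x+k by linarith)
    linarith
  have hnorm : (fun k : ℕ => ∫ s in Ioi (0:ℝ), ‖phiA ((k:ℝ)+1) s - phiA (x+k) s‖)
      = fun k : ℕ => 1/((k:ℝ)+1) - 1/(x+k) := by
    funext k
    rw [← htk_val k]
    apply setIntegral_congr_fun measurableSet_Ioi
    intro s hs
    exact Real.norm_of_nonneg (htk_nn k s hs)
  have hsummable : Summable (fun k : ℕ => 1/((k:ℝ)+1) - 1/(x+k)) := by
    have hb : Summable (fun k : ℕ => (x-1) * (1/((k:ℝ)+1)^2)) := by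
      apply Summable.mul_left
      have h0 : Summable (fun n : ℕ => 1/(n:ℝ)^2) :=
        Real.summable_one_div_nat_pow.mpr one_lt_two
      have h1 := (summable_nat_add_iff 1).mpr h0
      apply h1.congr
      intro k
      push_cast
      ring
    apply Summable.of_nonneg_of_le _ _ hb
    · intro k
      have h1 : 1/(x+k) ≤ 1/((k:ℝ)+1) :=
        one_div_le_one_div_of_le (hk1 k) (by linarith)
      linarith
    · intro k
      rw [div_sub_div _ _ (hk1 k).ne' (hxk k).ne', mul_one_div]
      rw [show 1*(x+(k:ℝ)) - ((k:ℝ)+1)*1 = x - 1 by ring]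
      apply div_le_div_of_nonneg_left hp.le (by positivity)
      nlinarith [hk1 k, hxk k]
  have hHasSum : HasSum (fun k : ℕ => 1/((k:ℝ)+1) - 1/(x+k))
      (∫ s in Ioi (0:ℝ), ∑' k : ℕ, (phiA ((k:ℝ)+1) s - phiA (x+k) s)) := by
    have h0 := hasSum_integral_of_summable_integral_norm
      (μ := volume.restrict (Ioi (0:ℝ)))
      (F := fun k : ℕ => fun s => phiA ((k:ℝ)+1) s - phiA (x+k) s)
      htk_int (by rw [hnorm]; exact hsummable)
    rwa [funext htk_val] at h0
  have hDG : digamma x + Real.eulerMascheroniConstant = ∫ s in Ioi (0:ℝ), g s := by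
    rw [aux_digamma_add_em x hx hHasSum]
    apply setIntegral_congr_fun measurableSet_Ioi
    intro s hs
    exact aux_g_tsum x s hs
  -- integrability of g by comparison
  have hg_cont : ContinuousOn g (Ioi (0:ℝ)) := by
    apply ContinuousOn.sub
    · exact continuousOn_const.div (by fun_prop) (fun s hs => by
        have : (0:ℝ) < s := hs; positivity)
    · apply ContinuousOn.div
      · exact continuousOn_id.rpow_const (fun s hs => Or.inl (ne_of_gt hs))
      · exact (continuousOn_const.add continuousOn_id).rpow_const
          (fun s hs => Or.inl (by have : (0:ℝ) < s := hs; exact ne_of_gt (show (0:ℝ) < 1 + s by linarith)))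
      · intro s hs
        have : (0:ℝ) < s := hs
        positivity
  have hg_nn : ∀ s ∈ Ioi (0:ℝ), 0 ≤ g s := by
    intro s hs
    have hs0 : (0:ℝ) < s := hs
    have h1s : (0:ℝ) < 1 + s := by linarith
    have hu0 : (0:ℝ) < (1+s)⁻¹ := by positivity
    have hu1 : (1+s)⁻¹ < 1 := by
      rw [inv_lt_one_iff₀]; right; linarith
    rw [hg]
    simp only
    rw [aux_g_form x s hs0]
    have h01 : (1 - (1+s)⁻¹)^(x-1) ≤ 1 :=
      Real.rpow_le_one (by linarith) (by linarith) hp.le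
    nlinarith
  have hg_ub2 : ∀ s : ℝ, 1 ≤ s →
      g s ≤ (x-1) * ((1+s)⁻¹)^2 + 2*(x-1) * ((1+s)⁻¹)^3 := aux_hg_ub2' x hx
  have hg_int : IntegrableOn g (Ioi (0:ℝ)) := by
    have hBint : IntegrableOn (fun s : ℝ => (4+3*(x-1)) * (1+s)^(-(1+1):ℝ)) (Ioi 0) :=
      (aux_pow_tail_integral 1 0 one_pos le_rfl).1.const_mul _
    apply Integrable.mono hBint (hg_cont.aestronglyMeasurable measurableSet_Ioi)
    rw [ae_restrict_iff' measurableSet_Ioi]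
    filter_upwards with s hs
    have hs0 : (0:ℝ) < s := hs
    have h1s : (0:ℝ) < 1 + s := by linarith
    have hu0 : (0:ℝ) < (1+s)⁻¹ := by positivity
    rw [Real.norm_of_nonneg (hg_nn s hs), Real.norm_of_nonneg (by
      have : (0:ℝ) < (1+s)^(-(1+1):ℝ) := Real.rpow_pos_of_pos h1s _
      positivity)]
    rw [aux_rpow2 s hs0.le]
    rcases le_total s 1 with hle | hle
    · -- g s ≤ u ≤ 1 ≤ 4 u^2
      have h01 : (1 - (1+s)⁻¹)^(x-1) ≤ 1 :=
        Real.rpow_le_one (by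
          have : (1+s)⁻¹ < 1 := by rw [inv_lt_one_iff₀]; right; linarith
          linarith) (by
          have : (1+s)⁻¹ ≤ 1 := by
            rw [inv_le_one_iff₀]; right; linarith
          linarith) hp.le
      have h02 : 0 ≤ (1 - (1+s)⁻¹)^(x-1) := Real.rpow_nonneg (by
        have : (1+s)⁻¹ ≤ 1 := by rw [inv_le_one_iff₀]; right; linarith
        linarith) _
      have hform := aux_g_form x s hs0
      rw [hg]; simp only
      rw [hform]
      have hu1 : (1:ℝ)/2 ≤ (1+s)⁻¹ := by
        rw [show (1:ℝ)/2 = 2⁻¹ by norm_num]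
        apply inv_anti₀ h1s
        linarith
      nlinarith
    · have h4 := hg_ub2 s hle
      have hu1 : (1+s)⁻¹ ≤ 1 := by
        rw [inv_le_one_iff₀]; right; linarith
      have h5 : ((1+s)⁻¹)^3 ≤ ((1+s)⁻¹)^2 := by nlinarith
      nlinarith [sq_nonneg ((1+s)⁻¹)]
  exact ⟨hg_int, hDG⟩

/-- digamma asymptotics of a Beta-type integral: for `x > 1`,
`lim_{a→∞} a (∫_0^a s^{x−1}/(1+s)^x ds − ln(1+a) + Ψ(x) + γ) = x − 1`; in particular
`∫_0^a s^{x−1}/(1+s)^x ds = ln(1+a) − (Ψ(x)+γ) + O(1/a)` as `a → ∞`. -/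
theorem beta_integral_digamma_asymptotics (x : ℝ) (hx : 1 < x) :
    Filter.Tendsto (fun a : ℝ => a *
        ((∫ s in Set.Ioo (0:ℝ) a, s ^ (x - 1) / (1 + s) ^ x)
          - Real.log (1 + a) + digamma x + Real.eulerMascheroniConstant))
      Filter.atTop (nhds (x - 1)) ∧
    (fun a : ℝ => (∫ s in Set.Ioo (0:ℝ) a, s ^ (x - 1) / (1 + s) ^ x)
        - (Real.log (1 + a) - (digamma x + Real.eulerMascheroniConstant)))
      =O[Filter.atTop] (fun a : ℝ => 1 / a) := by
  have hp : (0:ℝ) < x - 1 := by linarith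
  set g : ℝ → ℝ := fun s => 1/(1+s) - s^(x-1)/(1+s)^x with hgdef
  obtain ⟨hg_int, hDG⟩ := aux_g_master x hx
  set Q : ℝ → ℝ := fun a => (∫ s in Set.Ioo (0:ℝ) a, s ^ (x - 1) / (1 + s) ^ x)
      - Real.log (1 + a) + digamma x + Real.eulerMascheroniConstant with hQdef
  -- Q a = ∫_{Ioi a} g for a ≥ 1
  have hQ : ∀ a : ℝ, 1 ≤ a → Q a = ∫ s in Ioi a, g s := by
    intro a ha
    have ha0 : (0:ℝ) < a := by linarith
    have hcont1 : ContinuousOn (fun s : ℝ => (1+s)⁻¹) (Icc 0 a) := by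
      apply ContinuousOn.inv₀ (by fun_prop)
      intro s hs
      nlinarith [hs.1]
    have h_int1 : IntegrableOn (fun s : ℝ => (1+s)⁻¹) (Ioo 0 a) :=
      (hcont1.integrableOn_Icc).mono_set Ioo_subset_Icc_self
    have h_int_g : IntegrableOn g (Ioo 0 a) :=
      hg_int.mono_set (fun s hs => hs.1)
    have hmain_eq : (∫ s in Set.Ioo (0:ℝ) a, s ^ (x - 1) / (1 + s) ^ x)
        = (∫ s in Ioo (0:ℝ) a, (1+s)⁻¹) - ∫ s in Ioo (0:ℝ) a, g s := by
      rw [← integral_sub h_int1 h_int_g]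
      apply setIntegral_congr_fun measurableSet_Ioo
      intro s hs
      rw [hgdef]
      simp only
      rw [one_div]
      ring
    have hlog : (∫ s in Ioo (0:ℝ) a, (1+s)⁻¹) = Real.log (1+a) := by
      rw [← MeasureTheory.integral_Ioc_eq_integral_Ioo,
        ← intervalIntegral.integral_of_le ha0.le]
      have h1 := intervalIntegral.integral_comp_add_left (a := (0:ℝ)) (b := a)
        (f := fun u : ℝ => u⁻¹) 1
      have h2 : (∫ u in (1:ℝ)..(1+a), u⁻¹) = Real.log ((1+a)/1) := by
        apply integral_inv
        intro h
        rw [Set.mem_uIcc] at h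
        rcases h with ⟨h1, _⟩ | ⟨_, h2⟩ <;> linarith
      rw [h1, add_zero, h2, div_one]
    have hsplit : (∫ s in Ioi (0:ℝ), g s)
        = (∫ s in Ioo (0:ℝ) a, g s) + ∫ s in Ioi a, g s := by
      rw [← Set.Ioo_union_Ici_eq_Ioi ha0, setIntegral_union (by
          rw [Set.disjoint_left]
          intro s hs hs'
          exact absurd hs.2 (not_lt.mpr hs')) measurableSet_Ici h_int_g
        (hg_int.mono_set (fun s hs => lt_of_lt_of_le ha0 hs)),
        MeasureTheory.integral_Ici_eq_integral_Ioi]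
    rw [hQdef]
    simp only
    rw [hmain_eq, hlog]
    linarith [hDG, hsplit]
  -- tail integral bounds for a ≥ 1
  have htail_ub : ∀ a : ℝ, 1 ≤ a → (∫ s in Ioi a, g s)
      ≤ (x-1) * ((1+a)^(-1:ℝ)/1) + 2*(x-1) * ((1+a)^(-2:ℝ)/2) := by
    intro a ha
    have ha0 : (0:ℝ) ≤ a := by linarith
    have h2a := aux_pow_tail_integral 1 a one_pos ha0
    have h3a := aux_pow_tail_integral 2 a two_pos ha0
    have hint : IntegrableOn (fun s : ℝ =>
        (x-1) * (1+s)^(-(1+1):ℝ) + 2*(x-1) * (1+s)^(-(2+1):ℝ)) (Ioi a) :=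
      (h2a.1.const_mul _).add (h3a.1.const_mul _)
    calc (∫ s in Ioi a, g s)
        ≤ ∫ s in Ioi a, ((x-1) * (1+s)^(-(1+1):ℝ) + 2*(x-1) * (1+s)^(-(2+1):ℝ)) := by
          apply setIntegral_mono_on (hg_int.mono_set
            (Ioi_subset_Ioi (by linarith))) hint measurableSet_Ioi
          intro s hs
          have hs1 : (1:ℝ) ≤ s := le_of_lt (lt_of_le_of_lt ha hs)
          have hs0 : (0:ℝ) ≤ s := by linarith
          rw [aux_rpow2 s hs0, aux_rpow3 s hs0]
          exact aux_hg_ub2' x hx s hs1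
      _ = (x-1) * ((1+a)^(-1:ℝ)/1) + 2*(x-1) * ((1+a)^(-2:ℝ)/2) := by
          rw [integral_add (h2a.1.const_mul _) (h3a.1.const_mul _),
            integral_const_mul, integral_const_mul, h2a.2, h3a.2]
  have htail_lb : ∀ a : ℝ, 1 ≤ a →
      (x-1) * ((1+a)^(-1:ℝ)/1) - (x-1)^2 * ((1+a)^(-2:ℝ)/2) ≤ ∫ s in Ioi a, g s := by
    intro a ha
    have ha0 : (0:ℝ) ≤ a := by linarith
    have h2a := aux_pow_tail_integral 1 a one_pos ha0
    have h3a := aux_pow_tail_integral 2 a two_pos ha0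
    have hint : IntegrableOn (fun s : ℝ =>
        (x-1) * (1+s)^(-(1+1):ℝ) - (x-1)^2 * (1+s)^(-(2+1):ℝ)) (Ioi a) :=
      (h2a.1.const_mul _).sub (h3a.1.const_mul _)
    calc (x-1) * ((1+a)^(-1:ℝ)/1) - (x-1)^2 * ((1+a)^(-2:ℝ)/2)
        = ∫ s in Ioi a, ((x-1) * (1+s)^(-(1+1):ℝ) - (x-1)^2 * (1+s)^(-(2+1):ℝ)) := by
          rw [integral_sub (h2a.1.const_mul _) (h3a.1.const_mul _),
            integral_const_mul, integral_const_mul, h2a.2, h3a.2]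
      _ ≤ ∫ s in Ioi a, g s := by
          apply setIntegral_mono_on hint (hg_int.mono_set
            (Ioi_subset_Ioi (by linarith))) measurableSet_Ioi
          intro s hs
          have hs1 : (1:ℝ) ≤ s := le_of_lt (lt_of_le_of_lt ha hs)
          have hs0 : (0:ℝ) ≤ s := by linarith
          rw [aux_rpow2 s hs0, aux_rpow3 s hs0]
          exact aux_hg_lb2' x hx s hs1
  -- limits
  have hA : Tendsto (fun a : ℝ => a * (1+a)^(-1:ℝ)) atTop (𝓝 1) := by
    apply aux_tendsto_ratio.congr'
    filter_upwards [eventually_gt_atTop 0] with a ha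
    rw [Real.rpow_neg_one, div_eq_mul_inv]
  have hB : Tendsto (fun a : ℝ => a * (1+a)^(-2:ℝ)) atTop (𝓝 0) := by
    have h1 : Tendsto (fun a : ℝ => (a/(1+a)) * (1+a)⁻¹) atTop (𝓝 (1 * 0)) :=
      aux_tendsto_ratio.mul (tendsto_inv_atTop_zero.comp aux_tendsto_one_add_atTop)
    rw [one_mul] at h1
    apply h1.congr'
    filter_upwards [eventually_gt_atTop 0] with a ha
    have h1a : (0:ℝ) < 1 + a := by linarith
    rw [show (-2:ℝ) = -(1+1) by norm_num, aux_rpow2 a ha.le]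
    field_simp
    try ring
    try exact Or.inl trivial
  have hL : Tendsto (fun a : ℝ => a * ((x-1) * ((1+a)^(-1:ℝ)/1)
      - (x-1)^2 * ((1+a)^(-2:ℝ)/2))) atTop (𝓝 (x-1)) := by
    have h1 := (hA.const_mul (x-1)).sub (hB.const_mul ((x-1)^2/2))
    rw [mul_one, mul_zero, sub_zero] at h1
    apply h1.congr
    intro a
    ring
  have hU : Tendsto (fun a : ℝ => a * ((x-1) * ((1+a)^(-1:ℝ)/1)
      + 2*(x-1) * ((1+a)^(-2:ℝ)/2))) atTop (𝓝 (x-1)) := by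
    have h1 := (hA.const_mul (x-1)).add (hB.const_mul (x-1))
    rw [mul_one, mul_zero, add_zero] at h1
    apply h1.congr
    intro a
    ring
  have main1 : Tendsto (fun a : ℝ => a * Q a) atTop (𝓝 (x-1)) := by
    apply tendsto_of_tendsto_of_tendsto_of_le_of_le' hL hU
    · filter_upwards [eventually_ge_atTop 1] with a ha
      rw [hQ a ha]
      exact mul_le_mul_of_nonneg_left (htail_lb a ha) (by linarith)
    · filter_upwards [eventually_ge_atTop 1] with a ha
      rw [hQ a ha]
      exact mul_le_mul_of_nonneg_left (htail_ub a ha) (by linarith)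
  constructor
  · exact main1
  · have hO1 : (fun a : ℝ => a * Q a) =O[atTop] (fun _ : ℝ => (1:ℝ)) :=
      main1.isBigO_one ℝ
    have hO2 : (fun a : ℝ => (a * Q a) * (1/a)) =O[atTop] (fun a : ℝ => 1 * (1/a)) :=
      hO1.mul (isBigO_refl (fun a : ℝ => 1/a) atTop)
    have hO3 : (fun a : ℝ => Q a) =O[atTop] (fun a : ℝ => 1/a) := by
      apply hO2.congr'
      · filter_upwards [eventually_gt_atTop 0] with a ha
        field_simp
      · filter_upwards with a
        rw [one_mul]
    apply hO3.congr_left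
    intro a
    rw [hQdef]
    simp only
    ring
end
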